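/- arXiv:2508.00474 — 8 statements merged into one kernel-verified Lean document; each statement's English description precedes it below -/
import Mathlib

section
/- Let (M,∘,e) be an F-manifold. For vector fields X,Y,Z define D_{Y,Z}X := (L_X∘)(Y,Z), l_Y X := X∘Y, and Δ_e X := [e,X]. Then (D, l, Δ_e) is component data of a linear F-manifold over (M,∘,e) on the tangent bundle E = TM; in particular: l is C^∞(M)-linear in both arguments; D is C^∞(M)-bilinear and symmetric in (Y,Z) and satisfies the Leibniz rule D_{Y,Z}(fX) = f D_{Y,Z}X + Y(f) l_Z X + Z(f) l_Y X − ((Y∘Z)f)X; Δ_e(fX) = f Δ_e X + e(f)X; and conditions (i)–(vi) of component data hold. -/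
/-!
Abstract framework for linear F-manifolds.

`C` plays the role of the commutative ring `C^∞(M)` of smooth functions on a
manifold `M`, and `V` plays the role of the `C^∞(M)`-module of vector fields
on `M`, equipped with a Lie bracket and with the derivation action
`act X f = X(f)` of vector fields on functions, satisfying the usual laws.
-/

namespace LinearFMan

structure VFCalc (C : Type*) (V : Type*) [CommRing C] [AddCommGroup V] [Module C V] where
  bracket : V → V → V
  act : V → C → C
  act_add : ∀ (X : V) (f g : C), act X (f + g) = act X f + act X g
  act_mul : ∀ (X : V) (f g : C), act X (f * g) = f * act X g + g * act X f
  act_add_vf : ∀ (X Y : V) (f : C), act (X + Y) f = act X f + act Y f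
  act_smul_vf : ∀ (f : C) (X : V) (g : C), act (f • X) g = f * act X g
  bracket_add_left : ∀ X Y Z : V, bracket (X + Y) Z = bracket X Z + bracket Y Z
  bracket_add_right : ∀ X Y Z : V, bracket X (Y + Z) = bracket X Y + bracket X Z
  bracket_antisymm : ∀ X Y : V, bracket X Y = - bracket Y X
  bracket_smul_right : ∀ (f : C) (X Y : V),
    bracket X (f • Y) = f • bracket X Y + (act X f) • Y
  jacobi : ∀ X Y Z : V,
    bracket X (bracket Y Z) = bracket (bracket X Y) Z + bracket Y (bracket X Z)
  act_bracket : ∀ (X Y : V) (f : C),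
    act (bracket X Y) f = act X (act Y f) - act Y (act X f)

/-- A `C^∞(M)`-bilinear multiplication on vector fields. -/
structure Multiplication (C : Type*) (V : Type*) [CommRing C] [AddCommGroup V] [Module C V] where
  mul : V → V → V
  add_left : ∀ X Y Z : V, mul (X + Y) Z = mul X Z + mul Y Z
  add_right : ∀ X Y Z : V, mul X (Y + Z) = mul X Y + mul X Z
  smul_left : ∀ (f : C) (X Y : V), mul (f • X) Y = f • mul X Y
  smul_right : ∀ (f : C) (X Y : V), mul X (f • Y) = f • mul X Y

variable {C : Type*} {V : Type*} [CommRing C] [AddCommGroup V] [Module C V]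

/-- The Lie derivative `(L_X ∘)(Y,Z) = [X, Y∘Z] − [X,Y]∘Z − Y∘[X,Z]`. -/
def lieDerivMul (𝕍 : VFCalc C V) (m : Multiplication C V) (X Y Z : V) : V :=
  𝕍.bracket X (m.mul Y Z) - m.mul (𝕍.bracket X Y) Z - m.mul Y (𝕍.bracket X Z)

/-- An F-manifold: commutative associative multiplication with unit `e`
satisfying the Hertling–Manin condition. -/
structure IsFManifold (𝕍 : VFCalc C V) (m : Multiplication C V) (e : V) : Prop where
  comm : ∀ X Y, m.mul X Y = m.mul Y X
  assoc : ∀ X Y Z, m.mul (m.mul X Y) Z = m.mul X (m.mul Y Z)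
  unit : ∀ X, m.mul e X = X
  hertling_manin : ∀ X Y Z W,
    lieDerivMul 𝕍 m (m.mul X Y) Z W
      = m.mul X (lieDerivMul 𝕍 m Y Z W) + m.mul Y (lieDerivMul 𝕍 m X Z W)

/-- An Euler field: `(L_ℰ ∘)(X,Y) = X ∘ Y`. -/
def IsEulerField (𝕍 : VFCalc C V) (m : Multiplication C V) (ℰ : V) : Prop :=
  ∀ X Y, lieDerivMul 𝕍 m ℰ X Y = m.mul X Y

/-- A connection on `M`. -/
structure Connection (C : Type*) (V : Type*) [CommRing C] [AddCommGroup V] [Module C V]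
    (𝕍 : VFCalc C V) where
  nabla : V → V → V
  add_left : ∀ X Y Z : V, nabla (X + Y) Z = nabla X Z + nabla Y Z
  add_right : ∀ X Y Z : V, nabla X (Y + Z) = nabla X Y + nabla X Z
  smul_left : ∀ (f : C) (X Y : V), nabla (f • X) Y = f • nabla X Y
  leibniz : ∀ (f : C) (X Y : V), nabla X (f • Y) = f • nabla X Y + (𝕍.act X f) • Y

variable {𝕍 : VFCalc C V}

/-- Torsion `T^∇(X,Y) = ∇_X Y − ∇_Y X − [X,Y]`. -/
def torsion (cn : Connection C V 𝕍) (X Y : V) : V :=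
  cn.nabla X Y - cn.nabla Y X - 𝕍.bracket X Y

/-- The symmetric bracket `<X:Y> = ∇_X Y + ∇_Y X`. -/
def symBr (cn : Connection C V 𝕍) (X Y : V) : V :=
  cn.nabla X Y + cn.nabla Y X

/-- `∇_X(∘)(Y,Z) = ∇_X(Y∘Z) − (∇_X Y)∘Z − Y∘(∇_X Z)`. -/
def nablaMul (cn : Connection C V 𝕍) (m : Multiplication C V) (X Y Z : V) : V :=
  cn.nabla X (m.mul Y Z) - m.mul (cn.nabla X Y) Z - m.mul Y (cn.nabla X Z)

/-- A flat F-manifold. -/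
structure IsFlatFManifold (𝕍 : VFCalc C V) (m : Multiplication C V) (e : V)
    (cn : Connection C V 𝕍) : Prop where
  toIsFManifold : IsFManifold 𝕍 m e
  torsion_free : ∀ X Y, torsion cn X Y = 0
  flat : ∀ X Y Z,
    cn.nabla X (cn.nabla Y Z) - cn.nabla Y (cn.nabla X Z) = cn.nabla (𝕍.bracket X Y) Z
  nabla_unit : ∀ X, cn.nabla X e = 0
  nablaMul_symm : ∀ X Y Z, nablaMul cn m X Y Z = nablaMul cn m Y X Z

/-- Component data of a linear F-manifold over `(M, ∘, e)` on a vector bundle `E`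
whose module of sections is `S`. -/
structure ComponentData (C : Type*) (V : Type*) (S : Type*)
    [CommRing C] [AddCommGroup V] [Module C V] [AddCommGroup S] [Module C S]
    (𝕍 : VFCalc C V) (m : Multiplication C V) (e : V) where
  l : V → S → S
  D : V → V → S → S
  Δ : S → S
  l_add_vf : ∀ (X Y : V) (s : S), l (X + Y) s = l X s + l Y s
  l_smul_vf : ∀ (f : C) (X : V) (s : S), l (f • X) s = f • l X s
  l_add_sec : ∀ (X : V) (s t : S), l X (s + t) = l X s + l X t
  l_smul_sec : ∀ (X : V) (f : C) (s : S), l X (f • s) = f • l X s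
  D_add_left : ∀ (X Y Z : V) (s : S), D (X + Y) Z s = D X Z s + D Y Z s
  D_smul_left : ∀ (f : C) (X Y : V) (s : S), D (f • X) Y s = f • D X Y s
  D_symm : ∀ (X Y : V) (s : S), D X Y s = D Y X s
  D_add_sec : ∀ (X Y : V) (s t : S), D X Y (s + t) = D X Y s + D X Y t
  D_leibniz : ∀ (X Y : V) (f : C) (s : S),
    D X Y (f • s)
      = f • D X Y s + (𝕍.act X f) • l Y s + (𝕍.act Y f) • l X s - (𝕍.act (m.mul X Y) f) • s
  Δ_add : ∀ s t : S, Δ (s + t) = Δ s + Δ t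
  Δ_leibniz : ∀ (f : C) (s : S), Δ (f • s) = f • Δ s + (𝕍.act e f) • s
  cond_i : ∀ (X Y : V) (s : S), l X (l Y s) = l (m.mul X Y) s
  cond_ii_swap_xy : ∀ (X Y Z : V) (s : S),
    l Z (D X Y s) + D (m.mul X Y) Z s = l Z (D Y X s) + D (m.mul Y X) Z s
  cond_ii_swap_xz : ∀ (X Y Z : V) (s : S),
    l Z (D X Y s) + D (m.mul X Y) Z s = l X (D Z Y s) + D (m.mul Z Y) X s
  cond_iii : ∀ s : S, l e s = s
  cond_iv : ∀ (X : V) (s : S), l X (Δ s) = D e X s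
  cond_v : ∀ (X Y Z : V) (s : S),
    D X Y (l Z s) - l Z (D X Y s) = l (lieDerivMul 𝕍 m Z X Y) s
  cond_vi : ∀ (X Y Z W : V) (s : S),
    D Z W (D X Y s) - D X Y (D Z W s)
      = D (𝕍.bracket (m.mul X Y) Z) W s + D (𝕍.bracket (m.mul X Y) W) Z s
        + D (lieDerivMul 𝕍 m Y Z W) X s + D (lieDerivMul 𝕍 m X Z W) Y s
        - l X (D (𝕍.bracket Y W) Z s + D (𝕍.bracket Y Z) W s)
        - l Y (D (𝕍.bracket X W) Z s + D (𝕍.bracket X Z) W s)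

variable {S : Type*} [AddCommGroup S] [Module C S]

/-- The dual operation `l*`: `(l*_X μ)(s) = μ(l_X s)`. -/
def lstar {m : Multiplication C V} {e : V} (cd : ComponentData C V S 𝕍 m e)
    (X : V) (μ : S → C) : S → C :=
  fun s => μ (cd.l X s)

/-- The dual operation `D*`:
`(D*_{X,Y} μ)(s) = X(μ(l_Y s)) + Y(μ(l_X s)) − μ(l_{<X:Y>} s) − (X∘Y)(μ s) − μ(D_{X,Y} s)`. -/
def Dstar {m : Multiplication C V} {e : V} (cn : Connection C V 𝕍)
    (cd : ComponentData C V S 𝕍 m e) (X Y : V) (μ : S → C) : S → C :=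
  fun s =>
    𝕍.act X (μ (cd.l Y s)) + 𝕍.act Y (μ (cd.l X s)) - μ (cd.l (symBr cn X Y) s)
      - 𝕍.act (m.mul X Y) (μ s) - μ (cd.D X Y s)

/-- The dual of a derivation `Δ` covering the vector field `X`:
`(Δ* μ)(s) = X(μ s) − μ(Δ s)`. -/
def dualDerivation (𝕍 : VFCalc C V) (X : V) (Δ : S → S) (μ : S → C) : S → C :=
  fun s => 𝕍.act X (μ s) - μ (Δ s)

/-- The dual operation `Δ_{e*}`: `(Δ_{e*} μ)(s) = e(μ s) − μ(Δ_e s)`. -/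
def Deltastar {m : Multiplication C V} {e : V} (cd : ComponentData C V S 𝕍 m e)
    (μ : S → C) : S → C :=
  dualDerivation 𝕍 e cd.Δ μ

end LinearFMan


namespace LinearFMan

section Helpers

variable {C V : Type*} [CommRing C] [AddCommGroup V] [Module C V]
variable (𝕍 : VFCalc C V) (m : Multiplication C V)

private lemma mul0l (Y : V) : m.mul 0 Y = 0 := by
  have h := m.add_left 0 0 Y
  simpa using h.symm

private lemma mul0r (Y : V) : m.mul Y 0 = 0 := by
  have h := m.add_right Y 0 0
  simpa using h.symm

private lemma mulnegl (X Y : V) : m.mul (-X) Y = - m.mul X Y := by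
  have h : m.mul X Y + m.mul (-X) Y = 0 := by
    rw [← m.add_left]; simp [mul0l]
  exact (neg_eq_of_add_eq_zero_right h).symm

private lemma mulnegr (X Y : V) : m.mul X (-Y) = - m.mul X Y := by
  have h : m.mul X Y + m.mul X (-Y) = 0 := by
    rw [← m.add_right]; simp [mul0r]
  exact (neg_eq_of_add_eq_zero_right h).symm

private lemma mulsubl (X Y Z : V) : m.mul (X - Y) Z = m.mul X Z - m.mul Y Z := by
  rw [sub_eq_add_neg, m.add_left, mulnegl, sub_eq_add_neg]

private lemma mulsubr (X Y Z : V) : m.mul X (Y - Z) = m.mul X Y - m.mul X Z := by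
  rw [sub_eq_add_neg, m.add_right, mulnegr, sub_eq_add_neg]

private lemma br0r (X : V) : 𝕍.bracket X 0 = 0 := by
  have h := 𝕍.bracket_add_right X 0 0
  simpa using h.symm

private lemma brnegr (X Y : V) : 𝕍.bracket X (-Y) = - 𝕍.bracket X Y := by
  have h : 𝕍.bracket X Y + 𝕍.bracket X (-Y) = 0 := by
    rw [← 𝕍.bracket_add_right]; simp [br0r]
  exact (neg_eq_of_add_eq_zero_right h).symm

private lemma brsubr (X Y Z : V) :
    𝕍.bracket X (Y - Z) = 𝕍.bracket X Y - 𝕍.bracket X Z := by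
  rw [sub_eq_add_neg, 𝕍.bracket_add_right, brnegr, sub_eq_add_neg]

private lemma br0l (X : V) : 𝕍.bracket 0 X = 0 := by
  have h := 𝕍.bracket_add_left 0 0 X
  simpa using h.symm

private lemma brnegl (X Y : V) : 𝕍.bracket (-X) Y = - 𝕍.bracket X Y := by
  have h : 𝕍.bracket X Y + 𝕍.bracket (-X) Y = 0 := by
    rw [← 𝕍.bracket_add_left]; simp [br0l]
  exact (neg_eq_of_add_eq_zero_right h).symm

private lemma brsubl (X Y Z : V) :
    𝕍.bracket (X - Y) Z = 𝕍.bracket X Z - 𝕍.bracket Y Z := by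
  rw [sub_eq_add_neg, 𝕍.bracket_add_left, brnegl, sub_eq_add_neg]

private lemma brsmull (f : C) (X Y : V) :
    𝕍.bracket (f • X) Y = f • 𝕍.bracket X Y - (𝕍.act Y f) • X := by
  rw [𝕍.bracket_antisymm (f • X) Y, 𝕍.bracket_smul_right, 𝕍.bracket_antisymm Y X]
  rw [smul_neg]
  abel

private lemma br_br (u v A : V) :
    𝕍.bracket (𝕍.bracket u v) A
      = 𝕍.bracket u (𝕍.bracket v A) - 𝕍.bracket v (𝕍.bracket u A) := by
  rw [eq_sub_iff_add_eq]
  exact (𝕍.jacobi u v A).symm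

private lemma P_def (u X Y : V) :
    lieDerivMul 𝕍 m u X Y
      = 𝕍.bracket u (m.mul X Y) - m.mul (𝕍.bracket u X) Y - m.mul X (𝕍.bracket u Y) := rfl

private lemma L3 (u A B : V) :
    𝕍.bracket u (m.mul A B)
      = lieDerivMul 𝕍 m u A B + m.mul (𝕍.bracket u A) B + m.mul A (𝕍.bracket u B) := by
  rw [P_def]; abel

private lemma P_symm (hc : ∀ a b : V, m.mul a b = m.mul b a) (u A B : V) :
    lieDerivMul 𝕍 m u A B = lieDerivMul 𝕍 m u B A := by
  simp only [lieDerivMul, hc]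
  abel

private lemma P_sub_fst (a b X Y : V) :
    lieDerivMul 𝕍 m (a - b) X Y = lieDerivMul 𝕍 m a X Y - lieDerivMul 𝕍 m b X Y := by
  simp only [lieDerivMul, brsubl, mulsubl, mulsubr]
  abel

private lemma P_add_fst (a b X Y : V) :
    lieDerivMul 𝕍 m (a + b) X Y = lieDerivMul 𝕍 m a X Y + lieDerivMul 𝕍 m b X Y := by
  simp only [lieDerivMul, 𝕍.bracket_add_left, m.add_left, m.add_right]
  abel

private lemma P_add_snd (u a b Y : V) :
    lieDerivMul 𝕍 m u (a + b) Y = lieDerivMul 𝕍 m u a Y + lieDerivMul 𝕍 m u b Y := by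
  simp only [lieDerivMul, m.add_left, 𝕍.bracket_add_right, m.add_right]
  abel

/-- `L_{[u,v]}∘ = [L_u, L_v]∘` as tensors. -/
private lemma T1 (u v Z W : V) :
    lieDerivMul 𝕍 m (𝕍.bracket u v) Z W
      = 𝕍.bracket u (lieDerivMul 𝕍 m v Z W)
        - lieDerivMul 𝕍 m v (𝕍.bracket u Z) W - lieDerivMul 𝕍 m v Z (𝕍.bracket u W)
        - 𝕍.bracket v (lieDerivMul 𝕍 m u Z W)
        + lieDerivMul 𝕍 m u (𝕍.bracket v Z) W + lieDerivMul 𝕍 m u Z (𝕍.bracket v W) := by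
  simp only [lieDerivMul, brsubr, mulsubl, mulsubr, br_br]
  abel

private lemma norm3 (hc : ∀ a b : V, m.mul a b = m.mul b a) (s X Y Z : V) :
    m.mul (lieDerivMul 𝕍 m s X Y) Z + lieDerivMul 𝕍 m s (m.mul X Y) Z
      = 𝕍.bracket s (m.mul (m.mul X Y) Z)
        - m.mul (m.mul (𝕍.bracket s X) Y) Z
        - m.mul (m.mul X (𝕍.bracket s Y)) Z
        - m.mul (m.mul X Y) (𝕍.bracket s Z) := by
  simp only [lieDerivMul, mulsubl]
  abel

private lemma key_vi {e : V} (hF : IsFManifold 𝕍 m e) (X Y Z W s : V) :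
    lieDerivMul 𝕍 m (lieDerivMul 𝕍 m s X Y) Z W
        - lieDerivMul 𝕍 m (lieDerivMul 𝕍 m s Z W) X Y
      = lieDerivMul 𝕍 m s (𝕍.bracket (m.mul X Y) Z) W
        + lieDerivMul 𝕍 m s (𝕍.bracket (m.mul X Y) W) Z
        + lieDerivMul 𝕍 m s (lieDerivMul 𝕍 m Y Z W) X
        + lieDerivMul 𝕍 m s (lieDerivMul 𝕍 m X Z W) Y
        - m.mul (lieDerivMul 𝕍 m s (𝕍.bracket Y W) Z + lieDerivMul 𝕍 m s (𝕍.bracket Y Z) W) X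
        - m.mul (lieDerivMul 𝕍 m s (𝕍.bracket X W) Z + lieDerivMul 𝕍 m s (𝕍.bracket X Z) W) Y := by
  have hc := hF.comm
  have hHM := hF.hertling_manin
  have e1 : lieDerivMul 𝕍 m (lieDerivMul 𝕍 m s X Y) Z W
      = lieDerivMul 𝕍 m (𝕍.bracket s (m.mul X Y)) Z W
        - lieDerivMul 𝕍 m (m.mul (𝕍.bracket s X) Y) Z W
        - lieDerivMul 𝕍 m (m.mul X (𝕍.bracket s Y)) Z W := by
    rw [show lieDerivMul 𝕍 m s X Y
        = 𝕍.bracket s (m.mul X Y) - m.mul (𝕍.bracket s X) Y - m.mul X (𝕍.bracket s Y) from rfl,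
      P_sub_fst, P_sub_fst]
  have hPQ : lieDerivMul 𝕍 m (lieDerivMul 𝕍 m s Z W) X Y
      = m.mul Y (𝕍.bracket X (lieDerivMul 𝕍 m s Z W))
        + m.mul X (𝕍.bracket Y (lieDerivMul 𝕍 m s Z W))
        - 𝕍.bracket (m.mul X Y) (lieDerivMul 𝕍 m s Z W) := by
    rw [P_def, 𝕍.bracket_antisymm (lieDerivMul 𝕍 m s Z W) (m.mul X Y),
      𝕍.bracket_antisymm (lieDerivMul 𝕍 m s Z W) X,
      𝕍.bracket_antisymm (lieDerivMul 𝕍 m s Z W) Y, mulnegl, mulnegr,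
      hc (𝕍.bracket X (lieDerivMul 𝕍 m s Z W)) Y]
    abel
  rw [e1, T1 𝕍 m s (m.mul X Y) Z W, hHM (𝕍.bracket s X) Y Z W, hHM X (𝕍.bracket s Y) Z W,
    hHM X Y Z W, hHM X Y (𝕍.bracket s Z) W, hHM X Y Z (𝕍.bracket s W),
    𝕍.bracket_add_right s (m.mul X (lieDerivMul 𝕍 m Y Z W)) (m.mul Y (lieDerivMul 𝕍 m X Z W)),
    L3 𝕍 m s X (lieDerivMul 𝕍 m Y Z W), L3 𝕍 m s Y (lieDerivMul 𝕍 m X Z W),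
    T1 𝕍 m s X Z W, T1 𝕍 m s Y Z W, hPQ,
    P_symm 𝕍 m hc s Z (𝕍.bracket (m.mul X Y) W),
    P_symm 𝕍 m hc s Z (𝕍.bracket X W), P_symm 𝕍 m hc s Z (𝕍.bracket Y W),
    P_symm 𝕍 m hc s X (lieDerivMul 𝕍 m Y Z W), P_symm 𝕍 m hc s Y (lieDerivMul 𝕍 m X Z W)]
  simp only [m.add_left, m.add_right, mulsubr, mulnegr, mulsubl, mulnegl]
  simp only [hc]
  abel

end Helpers

end LinearFMan

namespace LinearFMan

/-- The tangent prolongation: for an F-manifold `(M,∘,e)`, the data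
`D_{Y,Z} X := (L_X ∘)(Y,Z)`, `l_Y X := X ∘ Y`, `Δ_e X := [e,X]` is component data of a
linear F-manifold over `(M,∘,e)` on `E = TM` (whose sections are the vector fields). -/
theorem statement_2
    {C V : Type*} [CommRing C] [AddCommGroup V] [Module C V]
    (𝕍 : VFCalc C V) (m : Multiplication C V) (e : V)
    (hF : IsFManifold 𝕍 m e) :
    ∃ cd : ComponentData C V V 𝕍 m e,
      (∀ Y X : V, cd.l Y X = m.mul X Y) ∧
      (∀ Y Z X : V, cd.D Y Z X = lieDerivMul 𝕍 m X Y Z) ∧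
      (∀ X : V, cd.Δ X = 𝕍.bracket e X) := by
  classical
  have hc := hF.comm
  have ha := hF.assoc
  have hl : ∀ a b c : V, m.mul a (m.mul b c) = m.mul b (m.mul a c) := by
    intro a b c; rw [← hF.assoc, hc a b, hF.assoc]
  refine ⟨{ l := fun Y X => m.mul X Y
            D := fun Y Z X => lieDerivMul 𝕍 m X Y Z
            Δ := fun X => 𝕍.bracket e X
            l_add_vf := fun X Y s => m.add_right s X Y
            l_smul_vf := fun f X s => m.smul_right f s X
            l_add_sec := fun X s t => m.add_left s t X
            l_smul_sec := fun X f s => m.smul_left f s X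
            D_add_left := fun X Y Z s => P_add_snd 𝕍 m s X Y Z
            D_smul_left := ?_
            D_symm := fun X Y s => P_symm 𝕍 m hc s X Y
            D_add_sec := fun X Y s t => P_add_fst 𝕍 m s t X Y
            D_leibniz := ?_
            Δ_add := fun s t => 𝕍.bracket_add_right e s t
            Δ_leibniz := fun f s => 𝕍.bracket_smul_right f e s
            cond_i := ?_
            cond_ii_swap_xy := ?_
            cond_ii_swap_xz := ?_
            cond_iii := ?_
            cond_iv := ?_
            cond_v := ?_
            cond_vi := fun X Y Z W s => key_vi 𝕍 m hF X Y Z W s },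
    fun Y X => rfl, fun Y Z X => rfl, fun X => rfl⟩
  · -- D_smul_left
    intro f X Y s
    simp only [lieDerivMul, m.smul_left, m.smul_right, 𝕍.bracket_smul_right, m.add_left,
      smul_sub, smul_add]
    abel
  · -- D_leibniz
    intro X Y f s
    simp only [lieDerivMul, brsmull, mulsubl, mulsubr, smul_sub, smul_add, m.smul_left, m.smul_right]
    rw [hc s Y, hc s X]
    abel
  · -- cond_i
    intro X Y s
    show m.mul (m.mul s Y) X = m.mul s (m.mul X Y)
    rw [ha, hc Y X]
  · -- cond_ii_swap_xy
    intro X Y Z s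
    show m.mul (lieDerivMul 𝕍 m s X Y) Z + lieDerivMul 𝕍 m s (m.mul X Y) Z
       = m.mul (lieDerivMul 𝕍 m s Y X) Z + lieDerivMul 𝕍 m s (m.mul Y X) Z
    rw [P_symm 𝕍 m hc s X Y, hc X Y]
  · -- cond_ii_swap_xz
    intro X Y Z s
    show m.mul (lieDerivMul 𝕍 m s X Y) Z + lieDerivMul 𝕍 m s (m.mul X Y) Z
       = m.mul (lieDerivMul 𝕍 m s Z Y) X + lieDerivMul 𝕍 m s (m.mul Z Y) X
    rw [norm3 𝕍 m hc s X Y Z, norm3 𝕍 m hc s Z Y X]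
    simp only [hc, ha, hl]
    abel
  · -- cond_iii
    intro s
    show m.mul s e = s
    rw [hc]; exact hF.unit s
  · -- cond_iv
    intro X s
    show m.mul (𝕍.bracket e s) X = lieDerivMul 𝕍 m s e X
    rw [lieDerivMul, hF.unit X, hF.unit (𝕍.bracket s X), 𝕍.bracket_antisymm s e, mulnegl]
    abel
  · -- cond_v
    intro X Y Z s
    show lieDerivMul 𝕍 m (m.mul s Z) X Y - m.mul (lieDerivMul 𝕍 m s X Y) Z
       = m.mul s (lieDerivMul 𝕍 m Z X Y)
    rw [hF.hertling_manin s Z X Y, hc Z (lieDerivMul 𝕍 m s X Y)]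
    abel


end LinearFMan
end

section
/- Let (M,∘,e,∇) be a flat F-manifold. Then for all vector fields X,Y,Z,V on M, the following expression vanishes identically: <[Z, X∘Y] : V> + <[V, X∘Y] : Z> + (L_{<X:Y>}∘)(Z,V) − (L_{<Z:V>}∘)(X,Y) − <X : (L_Y∘)(Z,V)> − <Y : (L_X∘)(Z,V)> + (L_Y∘)([X,V],Z) + (L_Y∘)([X,Z],V) + (L_X∘)([Y,V],Z) + (L_X∘)([Y,Z],V) + X∘(<[Y,V]:Z> + <[Y,Z]:V>) + Y∘(<[X,V]:Z> + <[X,Z]:V>) = 0. -/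
namespace LinearFMan

/-- On a flat F-manifold the expression of Lemma `duality-F` vanishes. -/
theorem statement_3
    {C V : Type*} [CommRing C] [AddCommGroup V] [Module C V]
    (𝕍 : VFCalc C V) (m : Multiplication C V) (e : V) (cn : Connection C V 𝕍)
    (hflat : IsFlatFManifold 𝕍 m e cn)
    (X Y Z W : V) :
    symBr cn (𝕍.bracket Z (m.mul X Y)) W + symBr cn (𝕍.bracket W (m.mul X Y)) Z
      + lieDerivMul 𝕍 m (symBr cn X Y) Z W - lieDerivMul 𝕍 m (symBr cn Z W) X Y
      - symBr cn X (lieDerivMul 𝕍 m Y Z W) - symBr cn Y (lieDerivMul 𝕍 m X Z W)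
      + lieDerivMul 𝕍 m Y (𝕍.bracket X W) Z + lieDerivMul 𝕍 m Y (𝕍.bracket X Z) W
      + lieDerivMul 𝕍 m X (𝕍.bracket Y W) Z + lieDerivMul 𝕍 m X (𝕍.bracket Y Z) W
      + m.mul X (symBr cn (𝕍.bracket Y W) Z + symBr cn (𝕍.bracket Y Z) W)
      + m.mul Y (symBr cn (𝕍.bracket X W) Z + symBr cn (𝕍.bracket X Z) W) = 0 := by
  obtain ⟨hFm, htf, hfl, hnu, hsym⟩ := hflat
  have hN0r : ∀ a : V, cn.nabla a 0 = 0 := by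
    intro a
    have h := cn.add_right a 0 0
    rw [add_zero] at h
    exact (add_left_cancel (a := cn.nabla a 0) (by rw [← h, add_zero])).symm
  have hN0l : ∀ a : V, cn.nabla 0 a = 0 := by
    intro a
    have h := cn.add_left 0 0 a
    rw [add_zero] at h
    exact (add_left_cancel (a := cn.nabla 0 a) (by rw [← h, add_zero])).symm
  have hM0r : ∀ a : V, m.mul a 0 = 0 := by
    intro a
    have h := m.add_right a 0 0
    rw [add_zero] at h
    exact (add_left_cancel (a := m.mul a 0) (by rw [← h, add_zero])).symm
  have hM0l : ∀ a : V, m.mul 0 a = 0 := by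
    intro a
    have h := m.add_left 0 0 a
    rw [add_zero] at h
    exact (add_left_cancel (a := m.mul 0 a) (by rw [← h, add_zero])).symm
  have hNnr : ∀ a x : V, cn.nabla a (-x) = -cn.nabla a x := by
    intro a x
    have h := cn.add_right a x (-x)
    rw [add_neg_cancel, hN0r] at h
    exact eq_neg_of_add_eq_zero_right h.symm
  have hNnl : ∀ a x : V, cn.nabla (-a) x = -cn.nabla a x := by
    intro a x
    have h := cn.add_left a (-a) x
    rw [add_neg_cancel, hN0l] at h
    exact eq_neg_of_add_eq_zero_right h.symm
  have hMnr : ∀ a x : V, m.mul a (-x) = -m.mul a x := by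
    intro a x
    have h := m.add_right a x (-x)
    rw [add_neg_cancel, hM0r] at h
    exact eq_neg_of_add_eq_zero_right h.symm
  have hMnl : ∀ a x : V, m.mul (-a) x = -m.mul a x := by
    intro a x
    have h := m.add_left a (-a) x
    rw [add_neg_cancel, hM0l] at h
    exact eq_neg_of_add_eq_zero_right h.symm
  have hNsr : ∀ a x y : V, cn.nabla a (x - y) = cn.nabla a x - cn.nabla a y := by
    intro a x y
    rw [sub_eq_add_neg, cn.add_right, hNnr, sub_eq_add_neg]
  have hNsl : ∀ a x y : V, cn.nabla (a - x) y = cn.nabla a y - cn.nabla x y := by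
    intro a x y
    rw [sub_eq_add_neg, cn.add_left, hNnl, sub_eq_add_neg]
  have hMsr : ∀ a x y : V, m.mul a (x - y) = m.mul a x - m.mul a y := by
    intro a x y
    rw [sub_eq_add_neg, m.add_right, hMnr, sub_eq_add_neg]
  have hMsl : ∀ a x y : V, m.mul (a - x) y = m.mul a y - m.mul x y := by
    intro a x y
    rw [sub_eq_add_neg, m.add_left, hMnl, sub_eq_add_neg]
  have hbr : ∀ a b : V, 𝕍.bracket a b = cn.nabla a b - cn.nabla b a := by
    intro a b
    have h := htf a b
    unfold torsion at h
    rw [sub_eq_zero] at h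
    exact h.symm
  have hF : ∀ a b c : V,
      cn.nabla a (cn.nabla b c) - cn.nabla b (cn.nabla a c)
        - (cn.nabla (cn.nabla a b) c - cn.nabla (cn.nabla b a) c) = 0 := by
    intro a b c
    have h := hfl a b c
    rw [hbr, hNsl] at h
    rw [h, sub_self]
  have hS : ∀ a b c : V, nablaMul cn m a b c - nablaMul cn m b a c = 0 := by
    intro a b c
    rw [hsym a b c, sub_self]
  have hC : ∀ a b : V, m.mul a b - m.mul b a = 0 := by
    intro a b
    rw [hFm.comm a b, sub_self]
  have key :
      ((1 : ℤ) • (m.mul W (cn.nabla X (cn.nabla Y Z) - cn.nabla Y (cn.nabla X Z) - (cn.nabla (cn.nabla X Y) Z - cn.nabla (cn.nabla Y X) Z)))) +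
      ((-1 : ℤ) • (m.mul W (cn.nabla X (cn.nabla Z Y) - cn.nabla Z (cn.nabla X Y) - (cn.nabla (cn.nabla X Z) Y - cn.nabla (cn.nabla Z X) Y)))) +
      ((-1 : ℤ) • (m.mul Y (cn.nabla X (cn.nabla W Z) - cn.nabla W (cn.nabla X Z) - (cn.nabla (cn.nabla X W) Z - cn.nabla (cn.nabla W X) Z)))) +
      ((-1 : ℤ) • (m.mul Y (cn.nabla X (cn.nabla Z W) - cn.nabla Z (cn.nabla X W) - (cn.nabla (cn.nabla X Z) W - cn.nabla (cn.nabla Z X) W)))) +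
      ((-1 : ℤ) • (m.mul Z (cn.nabla X (cn.nabla W Y) - cn.nabla W (cn.nabla X Y) - (cn.nabla (cn.nabla X W) Y - cn.nabla (cn.nabla W X) Y)))) +
      ((1 : ℤ) • (m.mul Z (cn.nabla X (cn.nabla Y W) - cn.nabla Y (cn.nabla X W) - (cn.nabla (cn.nabla X Y) W - cn.nabla (cn.nabla Y X) W)))) +
      ((-1 : ℤ) • (cn.nabla W (nablaMul cn m Y Z X - nablaMul cn m Z Y X))) +
      ((-1 : ℤ) • (cn.nabla X (m.mul (cn.nabla W Y) Z - m.mul Z (cn.nabla W Y)))) +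
      ((-2 : ℤ) • (cn.nabla X (m.mul (cn.nabla W Z) Y - m.mul Y (cn.nabla W Z)))) +
      ((1 : ℤ) • (cn.nabla X (m.mul (cn.nabla Y W) Z - m.mul Z (cn.nabla Y W)))) +
      ((-1 : ℤ) • (cn.nabla Y (m.mul (cn.nabla W X) Z - m.mul Z (cn.nabla W X)))) +
      ((2 : ℤ) • (cn.nabla Y (m.mul (cn.nabla W Z) X - m.mul X (cn.nabla W Z)))) +
      ((1 : ℤ) • (cn.nabla Y (m.mul (cn.nabla X W) Z - m.mul Z (cn.nabla X W)))) +
      ((-2 : ℤ) • (cn.nabla Y (m.mul (cn.nabla Z W) X - m.mul X (cn.nabla Z W)))) +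
      ((-2 : ℤ) • (cn.nabla Y (nablaMul cn m X Z W - nablaMul cn m Z X W))) +
      ((-1 : ℤ) • (cn.nabla Y (nablaMul cn m Z W X - nablaMul cn m W Z X))) +
      ((2 : ℤ) • (cn.nabla Z (m.mul (cn.nabla W Y) X - m.mul X (cn.nabla W Y)))) +
      ((-2 : ℤ) • (cn.nabla Z (m.mul (cn.nabla Y W) X - m.mul X (cn.nabla Y W)))) +
      ((2 : ℤ) • (cn.nabla Z (m.mul (cn.nabla Y X) W - m.mul W (cn.nabla Y X)))) +
      ((-1 : ℤ) • (cn.nabla Z (nablaMul cn m Y W X - nablaMul cn m W Y X))) +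
      ((1 : ℤ) • (cn.nabla (m.mul (cn.nabla W Y) Z - m.mul Z (cn.nabla W Y)) X)) +
      ((-1 : ℤ) • (cn.nabla (m.mul (cn.nabla Y W) Z - m.mul Z (cn.nabla Y W)) X)) +
      ((1 : ℤ) • (cn.nabla (m.mul (cn.nabla W X) Z - m.mul Z (cn.nabla W X)) Y)) +
      ((-1 : ℤ) • (cn.nabla (m.mul (cn.nabla X W) Z - m.mul Z (cn.nabla X W)) Y)) +
      ((2 : ℤ) • (cn.nabla W (cn.nabla Z (m.mul X Y - m.mul Y X)))) +
      ((-2 : ℤ) • (cn.nabla Z (cn.nabla Y (m.mul X W - m.mul W X)))) +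
      ((-1 : ℤ) • (m.mul (cn.nabla W (cn.nabla Y Z)) X - m.mul X (cn.nabla W (cn.nabla Y Z)))) +
      ((1 : ℤ) • (m.mul (cn.nabla W (cn.nabla Z Y)) X - m.mul X (cn.nabla W (cn.nabla Z Y)))) +
      ((-1 : ℤ) • (m.mul (cn.nabla X W) (cn.nabla Y Z) - m.mul (cn.nabla Y Z) (cn.nabla X W))) +
      ((1 : ℤ) • (m.mul (cn.nabla X W) (cn.nabla Z Y) - m.mul (cn.nabla Z Y) (cn.nabla X W))) +
      ((-2 : ℤ) • (m.mul (cn.nabla X Y) (cn.nabla W Z) - m.mul (cn.nabla W Z) (cn.nabla X Y))) +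
      ((-1 : ℤ) • (m.mul (cn.nabla X Z) (cn.nabla W Y) - m.mul (cn.nabla W Y) (cn.nabla X Z))) +
      ((1 : ℤ) • (m.mul (cn.nabla X Z) (cn.nabla Y W) - m.mul (cn.nabla Y W) (cn.nabla X Z))) +
      ((1 : ℤ) • (m.mul (cn.nabla X (cn.nabla W Y)) Z - m.mul Z (cn.nabla X (cn.nabla W Y)))) +
      ((1 : ℤ) • (m.mul (cn.nabla X (cn.nabla W Z)) Y - m.mul Y (cn.nabla X (cn.nabla W Z)))) +
      ((-1 : ℤ) • (m.mul (cn.nabla X (cn.nabla Y W)) Z - m.mul Z (cn.nabla X (cn.nabla Y W)))) +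
      ((1 : ℤ) • (m.mul (cn.nabla X (cn.nabla Y Z)) W - m.mul W (cn.nabla X (cn.nabla Y Z)))) +
      ((-1 : ℤ) • (m.mul (cn.nabla X (cn.nabla Z W)) Y - m.mul Y (cn.nabla X (cn.nabla Z W)))) +
      ((-1 : ℤ) • (m.mul (cn.nabla X (cn.nabla Z Y)) W - m.mul W (cn.nabla X (cn.nabla Z Y)))) +
      ((1 : ℤ) • (m.mul (cn.nabla Y W) (cn.nabla Z X) - m.mul (cn.nabla Z X) (cn.nabla Y W))) +
      ((2 : ℤ) • (m.mul (cn.nabla Y X) (cn.nabla W Z) - m.mul (cn.nabla W Z) (cn.nabla Y X))) +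
      ((-2 : ℤ) • (m.mul (cn.nabla Y X) (cn.nabla Z W) - m.mul (cn.nabla Z W) (cn.nabla Y X))) +
      ((-1 : ℤ) • (m.mul (cn.nabla Y Z) (cn.nabla W X) - m.mul (cn.nabla W X) (cn.nabla Y Z))) +
      ((1 : ℤ) • (m.mul (cn.nabla Y (cn.nabla W X)) Z - m.mul Z (cn.nabla Y (cn.nabla W X)))) +
      ((-1 : ℤ) • (m.mul (cn.nabla Y (cn.nabla W Z)) X - m.mul X (cn.nabla Y (cn.nabla W Z)))) +
      ((-1 : ℤ) • (m.mul (cn.nabla Y (cn.nabla X W)) Z - m.mul Z (cn.nabla Y (cn.nabla X W)))) +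
      ((-1 : ℤ) • (m.mul (cn.nabla Y (cn.nabla X Z)) W - m.mul W (cn.nabla Y (cn.nabla X Z)))) +
      ((1 : ℤ) • (m.mul (cn.nabla Y (cn.nabla Z W)) X - m.mul X (cn.nabla Y (cn.nabla Z W)))) +
      ((1 : ℤ) • (m.mul (cn.nabla Y (cn.nabla Z X)) W - m.mul W (cn.nabla Y (cn.nabla Z X)))) +
      ((1 : ℤ) • (m.mul (cn.nabla Z X) (cn.nabla W Y) - m.mul (cn.nabla W Y) (cn.nabla Z X))) +
      ((1 : ℤ) • (m.mul (cn.nabla Z Y) (cn.nabla W X) - m.mul (cn.nabla W X) (cn.nabla Z Y))) +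
      ((-1 : ℤ) • (m.mul (cn.nabla Z (cn.nabla W Y)) X - m.mul X (cn.nabla Z (cn.nabla W Y)))) +
      ((1 : ℤ) • (m.mul (cn.nabla Z (cn.nabla X Y)) W - m.mul W (cn.nabla Z (cn.nabla X Y)))) +
      ((1 : ℤ) • (m.mul (cn.nabla Z (cn.nabla Y W)) X - m.mul X (cn.nabla Z (cn.nabla Y W)))) +
      ((-1 : ℤ) • (m.mul (cn.nabla Z (cn.nabla Y X)) W - m.mul W (cn.nabla Z (cn.nabla Y X)))) +
      ((-1 : ℤ) • (m.mul (cn.nabla (cn.nabla W X) Y) Z - m.mul Z (cn.nabla (cn.nabla W X) Y))) +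
      ((-1 : ℤ) • (m.mul (cn.nabla (cn.nabla W Y) X) Z - m.mul Z (cn.nabla (cn.nabla W Y) X))) +
      ((1 : ℤ) • (m.mul (cn.nabla (cn.nabla W Y) Z) X - m.mul X (cn.nabla (cn.nabla W Y) Z))) +
      ((-1 : ℤ) • (m.mul (cn.nabla (cn.nabla W Z) X) Y - m.mul Y (cn.nabla (cn.nabla W Z) X))) +
      ((1 : ℤ) • (m.mul (cn.nabla (cn.nabla W Z) Y) X - m.mul X (cn.nabla (cn.nabla W Z) Y))) +
      ((1 : ℤ) • (m.mul (cn.nabla (cn.nabla X W) Y) Z - m.mul Z (cn.nabla (cn.nabla X W) Y))) +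
      ((-1 : ℤ) • (m.mul (cn.nabla (cn.nabla X Y) Z) W - m.mul W (cn.nabla (cn.nabla X Y) Z))) +
      ((1 : ℤ) • (m.mul (cn.nabla (cn.nabla X Z) Y) W - m.mul W (cn.nabla (cn.nabla X Z) Y))) +
      ((1 : ℤ) • (m.mul (cn.nabla (cn.nabla Y W) X) Z - m.mul Z (cn.nabla (cn.nabla Y W) X))) +
      ((-1 : ℤ) • (m.mul (cn.nabla (cn.nabla Y W) Z) X - m.mul X (cn.nabla (cn.nabla Y W) Z))) +
      ((1 : ℤ) • (m.mul (cn.nabla (cn.nabla Y X) Z) W - m.mul W (cn.nabla (cn.nabla Y X) Z))) +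
      ((1 : ℤ) • (m.mul (cn.nabla (cn.nabla Y Z) W) X - m.mul X (cn.nabla (cn.nabla Y Z) W))) +
      ((-1 : ℤ) • (m.mul (cn.nabla (cn.nabla Y Z) X) W - m.mul W (cn.nabla (cn.nabla Y Z) X))) +
      ((1 : ℤ) • (m.mul (cn.nabla (cn.nabla Z W) X) Y - m.mul Y (cn.nabla (cn.nabla Z W) X))) +
      ((-1 : ℤ) • (m.mul (cn.nabla (cn.nabla Z W) Y) X - m.mul X (cn.nabla (cn.nabla Z W) Y))) +
      ((-1 : ℤ) • (m.mul (cn.nabla (cn.nabla Z X) Y) W - m.mul W (cn.nabla (cn.nabla Z X) Y))) +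
      ((-1 : ℤ) • (m.mul (cn.nabla (cn.nabla Z Y) W) X - m.mul X (cn.nabla (cn.nabla Z Y) W))) +
      ((1 : ℤ) • (m.mul (cn.nabla (cn.nabla Z Y) X) W - m.mul W (cn.nabla (cn.nabla Z Y) X))) +
      ((-1 : ℤ) • (cn.nabla X (cn.nabla Y (m.mul Z W)) - cn.nabla Y (cn.nabla X (m.mul Z W)) - (cn.nabla (cn.nabla X Y) (m.mul Z W) - cn.nabla (cn.nabla Y X) (m.mul Z W)))) +
      ((-1 : ℤ) • (cn.nabla Y (cn.nabla W (m.mul Z X)) - cn.nabla W (cn.nabla Y (m.mul Z X)) - (cn.nabla (cn.nabla Y W) (m.mul Z X) - cn.nabla (cn.nabla W Y) (m.mul Z X)))) +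
      ((1 : ℤ) • (cn.nabla Y (cn.nabla Z (m.mul W X)) - cn.nabla Z (cn.nabla Y (m.mul W X)) - (cn.nabla (cn.nabla Y Z) (m.mul W X) - cn.nabla (cn.nabla Z Y) (m.mul W X)))) +
      ((-2 : ℤ) • (cn.nabla Y (cn.nabla Z (m.mul X W)) - cn.nabla Z (cn.nabla Y (m.mul X W)) - (cn.nabla (cn.nabla Y Z) (m.mul X W) - cn.nabla (cn.nabla Z Y) (m.mul X W)))) +
      ((1 : ℤ) • (cn.nabla Z (cn.nabla W (m.mul X Y)) - cn.nabla W (cn.nabla Z (m.mul X Y)) - (cn.nabla (cn.nabla Z W) (m.mul X Y) - cn.nabla (cn.nabla W Z) (m.mul X Y)))) +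
      ((-1 : ℤ) • (cn.nabla Z (cn.nabla W (m.mul Y X)) - cn.nabla W (cn.nabla Z (m.mul Y X)) - (cn.nabla (cn.nabla Z W) (m.mul Y X) - cn.nabla (cn.nabla W Z) (m.mul Y X)))) +
      ((1 : ℤ) • (cn.nabla (m.mul X Y) (cn.nabla W Z) - cn.nabla W (cn.nabla (m.mul X Y) Z) - (cn.nabla (cn.nabla (m.mul X Y) W) Z - cn.nabla (cn.nabla W (m.mul X Y)) Z))) +
      ((1 : ℤ) • (cn.nabla (m.mul X Y) (cn.nabla Z W) - cn.nabla Z (cn.nabla (m.mul X Y) W) - (cn.nabla (cn.nabla (m.mul X Y) Z) W - cn.nabla (cn.nabla Z (m.mul X Y)) W))) +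
      ((-1 : ℤ) • (cn.nabla (m.mul Z W) (cn.nabla X Y) - cn.nabla X (cn.nabla (m.mul Z W) Y) - (cn.nabla (cn.nabla (m.mul Z W) X) Y - cn.nabla (cn.nabla X (m.mul Z W)) Y))) +
      ((-1 : ℤ) • (cn.nabla (m.mul Z W) (cn.nabla Y X) - cn.nabla Y (cn.nabla (m.mul Z W) X) - (cn.nabla (cn.nabla (m.mul Z W) Y) X - cn.nabla (cn.nabla Y (m.mul Z W)) X))) +
      ((-2 : ℤ) • (nablaMul cn m X Y (cn.nabla W Z) - nablaMul cn m Y X (cn.nabla W Z))) +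
      ((-2 : ℤ) • (nablaMul cn m X Z (cn.nabla W Y) - nablaMul cn m Z X (cn.nabla W Y))) +
      ((2 : ℤ) • (nablaMul cn m X Z (cn.nabla Y W) - nablaMul cn m Z X (cn.nabla Y W))) +
      ((-1 : ℤ) • (nablaMul cn m Y W (cn.nabla Z X) - nablaMul cn m W Y (cn.nabla Z X))) +
      ((-1 : ℤ) • (nablaMul cn m Y Z (cn.nabla W X) - nablaMul cn m Z Y (cn.nabla W X))) +
      ((1 : ℤ) • (nablaMul cn m Z W (cn.nabla Y X) - nablaMul cn m W Z (cn.nabla Y X))) +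
      ((1 : ℤ) • (nablaMul cn m (cn.nabla W Y) Z X - nablaMul cn m Z (cn.nabla W Y) X)) +
      ((-2 : ℤ) • (nablaMul cn m (cn.nabla W Z) X Y - nablaMul cn m X (cn.nabla W Z) Y)) +
      ((1 : ℤ) • (nablaMul cn m (cn.nabla W Z) Y X - nablaMul cn m Y (cn.nabla W Z) X)) +
      ((-1 : ℤ) • (nablaMul cn m (cn.nabla Y W) Z X - nablaMul cn m Z (cn.nabla Y W) X)) +
      ((2 : ℤ) • (nablaMul cn m (cn.nabla Y X) Z W - nablaMul cn m Z (cn.nabla Y X) W)) +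
      ((1 : ℤ) • (nablaMul cn m (cn.nabla Y Z) W X - nablaMul cn m W (cn.nabla Y Z) X)) +
      ((-2 : ℤ) • (nablaMul cn m (cn.nabla Y Z) X W - nablaMul cn m X (cn.nabla Y Z) W)) +
      ((-1 : ℤ) • (nablaMul cn m (cn.nabla Z W) Y X - nablaMul cn m Y (cn.nabla Z W) X)) +
      ((-1 : ℤ) • (nablaMul cn m (cn.nabla Z Y) W X - nablaMul cn m W (cn.nabla Z Y) X)) +
      ((2 : ℤ) • (nablaMul cn m (cn.nabla Z Y) X W - nablaMul cn m X (cn.nabla Z Y) W)) = (0 : V) := by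
    simp only [hF, hS, hC, hM0r, hM0l, hN0r, hN0l, smul_zero, add_zero, zero_add]
  refine Eq.trans ?_ key
  simp only [symBr, lieDerivMul, nablaMul, hbr, cn.add_left, cn.add_right, m.add_left,
    m.add_right, hNsr, hNsl, hMsr, hMsl, hNnr, hNnl, hMnr, hMnl]
  abel

end LinearFMan
end

section
/- Let (M,∘,e) be an F-manifold. Then for all vector fields X,Y,Z,V,W on M: (L_W∘)([X∘Y, Z], V) + (L_W∘)([X∘Y, V], Z) + (L_W∘)((L_Y∘)(Z,V), X) + (L_W∘)((L_X∘)(Z,V), Y) − X∘((L_W∘)([Y,V], Z) + (L_W∘)([Y,Z], V)) − Y∘((L_W∘)([X,V], Z) + (L_W∘)([X,Z], V)) + (L_{(L_W∘)(Z,V)}∘)(X,Y) − (L_{(L_W∘)(X,Y)}∘)(Z,V) = 0. -/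
namespace LinearFMan

section Helpers

variable {C V : Type*} [CommRing C] [AddCommGroup V] [Module C V]

private def brR (𝕍 : VFCalc C V) (X : V) : V →+ V :=
  AddMonoidHom.mk' (𝕍.bracket X) (𝕍.bracket_add_right X)

private def brL (𝕍 : VFCalc C V) (X : V) : V →+ V :=
  AddMonoidHom.mk' (fun Y => 𝕍.bracket Y X) (fun a b => 𝕍.bracket_add_left a b X)

private def muR (m : Multiplication C V) (X : V) : V →+ V :=
  AddMonoidHom.mk' (m.mul X) (m.add_right X)

private def muL (m : Multiplication C V) (X : V) : V →+ V :=
  AddMonoidHom.mk' (fun Y => m.mul Y X) (fun a b => m.add_left a b X)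

lemma br_sub_r (𝕍 : VFCalc C V) (X a b : V) :
    𝕍.bracket X (a - b) = 𝕍.bracket X a - 𝕍.bracket X b := (brR 𝕍 X).map_sub a b

lemma br_sub_l (𝕍 : VFCalc C V) (X a b : V) :
    𝕍.bracket (a - b) X = 𝕍.bracket a X - 𝕍.bracket b X := (brL 𝕍 X).map_sub a b

lemma br_neg_r (𝕍 : VFCalc C V) (X a : V) :
    𝕍.bracket X (-a) = - 𝕍.bracket X a := (brR 𝕍 X).map_neg a

lemma br_neg_l (𝕍 : VFCalc C V) (X a : V) :
    𝕍.bracket (-a) X = - 𝕍.bracket a X := (brL 𝕍 X).map_neg a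

lemma br_zero_r (𝕍 : VFCalc C V) (X : V) : 𝕍.bracket X 0 = 0 := (brR 𝕍 X).map_zero

lemma br_zero_l (𝕍 : VFCalc C V) (X : V) : 𝕍.bracket 0 X = 0 := (brL 𝕍 X).map_zero

lemma mu_sub_r (m : Multiplication C V) (X a b : V) :
    m.mul X (a - b) = m.mul X a - m.mul X b := (muR m X).map_sub a b

lemma mu_sub_l (m : Multiplication C V) (X a b : V) :
    m.mul (a - b) X = m.mul a X - m.mul b X := (muL m X).map_sub a b

lemma mu_neg_r (m : Multiplication C V) (X a : V) :
    m.mul X (-a) = - m.mul X a := (muR m X).map_neg a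

lemma mu_neg_l (m : Multiplication C V) (X a : V) :
    m.mul (-a) X = - m.mul a X := (muL m X).map_neg a

lemma mu_zero_r (m : Multiplication C V) (X : V) : m.mul X 0 = 0 := (muR m X).map_zero

lemma mu_zero_l (m : Multiplication C V) (X : V) : m.mul 0 X = 0 := (muL m X).map_zero

end Helpers

set_option maxHeartbeats 4000000 in
/-- (Lemma `prolong-aux`.) On any F-manifold `(M,∘,e)`, for all vector
fields `X, Y, Z, U, W` (here `U` plays the role of `V` in the paper):
`(L_W∘)([X∘Y,Z],U) + (L_W∘)([X∘Y,U],Z) + (L_W∘)((L_Y∘)(Z,U),X) + (L_W∘)((L_X∘)(Z,U),Y)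
 − X∘((L_W∘)([Y,U],Z) + (L_W∘)([Y,Z],U)) − Y∘((L_W∘)([X,U],Z) + (L_W∘)([X,Z],U))
 + (L_{(L_W∘)(Z,U)}∘)(X,Y) − (L_{(L_W∘)(X,Y)}∘)(Z,U) = 0`. -/


theorem statement_7
    {C V : Type*} [CommRing C] [AddCommGroup V] [Module C V]
    (𝕍 : VFCalc C V) (m : Multiplication C V) (e : V)
    (hF : IsFManifold 𝕍 m e)
    (X Y Z U W : V) :
    lieDerivMul 𝕍 m W (𝕍.bracket (m.mul X Y) Z) U
      + lieDerivMul 𝕍 m W (𝕍.bracket (m.mul X Y) U) Z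
      + lieDerivMul 𝕍 m W (lieDerivMul 𝕍 m Y Z U) X
      + lieDerivMul 𝕍 m W (lieDerivMul 𝕍 m X Z U) Y
      - m.mul X (lieDerivMul 𝕍 m W (𝕍.bracket Y U) Z
          + lieDerivMul 𝕍 m W (𝕍.bracket Y Z) U)
      - m.mul Y (lieDerivMul 𝕍 m W (𝕍.bracket X U) Z
          + lieDerivMul 𝕍 m W (𝕍.bracket X Z) U)
      + lieDerivMul 𝕍 m (lieDerivMul 𝕍 m W Z U) X Y
      - lieDerivMul 𝕍 m (lieDerivMul 𝕍 m W X Y) Z U = 0 := by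
  have jw := 𝕍.jacobi W
  have hT : ∀ A B P Q : V,
      lieDerivMul 𝕍 m (m.mul A B) P Q
        - m.mul A (lieDerivMul 𝕍 m B P Q) - m.mul B (lieDerivMul 𝕍 m A P Q) = 0 := by
    intro A B P Q; rw [hF.hertling_manin]; abel
  have key :
      lieDerivMul 𝕍 m W (𝕍.bracket (m.mul X Y) Z) U
      + lieDerivMul 𝕍 m W (𝕍.bracket (m.mul X Y) U) Z
      + lieDerivMul 𝕍 m W (lieDerivMul 𝕍 m Y Z U) X
      + lieDerivMul 𝕍 m W (lieDerivMul 𝕍 m X Z U) Y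
      - m.mul X (lieDerivMul 𝕍 m W (𝕍.bracket Y U) Z
          + lieDerivMul 𝕍 m W (𝕍.bracket Y Z) U)
      - m.mul Y (lieDerivMul 𝕍 m W (𝕍.bracket X U) Z
          + lieDerivMul 𝕍 m W (𝕍.bracket X Z) U)
      + lieDerivMul 𝕍 m (lieDerivMul 𝕍 m W Z U) X Y
      - lieDerivMul 𝕍 m (lieDerivMul 𝕍 m W X Y) Z U
    =
      -(𝕍.bracket W (lieDerivMul 𝕍 m (m.mul X Y) Z U
          - m.mul X (lieDerivMul 𝕍 m Y Z U) - m.mul Y (lieDerivMul 𝕍 m X Z U)))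
      + (lieDerivMul 𝕍 m (m.mul (𝕍.bracket W X) Y) Z U
          - m.mul (𝕍.bracket W X) (lieDerivMul 𝕍 m Y Z U)
          - m.mul Y (lieDerivMul 𝕍 m (𝕍.bracket W X) Z U))
      + (lieDerivMul 𝕍 m (m.mul X (𝕍.bracket W Y)) Z U
          - m.mul X (lieDerivMul 𝕍 m (𝕍.bracket W Y) Z U)
          - m.mul (𝕍.bracket W Y) (lieDerivMul 𝕍 m X Z U))
      + (lieDerivMul 𝕍 m (m.mul X Y) (𝕍.bracket W Z) U
          - m.mul X (lieDerivMul 𝕍 m Y (𝕍.bracket W Z) U)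
          - m.mul Y (lieDerivMul 𝕍 m X (𝕍.bracket W Z) U))
      + (lieDerivMul 𝕍 m (m.mul X Y) Z (𝕍.bracket W U)
          - m.mul X (lieDerivMul 𝕍 m Y Z (𝕍.bracket W U))
          - m.mul Y (lieDerivMul 𝕍 m X Z (𝕍.bracket W U))) := by
    simp only [lieDerivMul, br_sub_r, br_sub_l, 𝕍.bracket_add_left, 𝕍.bracket_add_right,
      br_neg_r, br_neg_l, m.add_left, m.add_right, mu_sub_r, mu_sub_l, mu_neg_r, mu_neg_l, jw]
    simp only [𝕍.bracket_antisymm W U,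
      𝕍.bracket_antisymm X U,
      𝕍.bracket_antisymm Y U,
      𝕍.bracket_antisymm (𝕍.bracket W X) U,
      𝕍.bracket_antisymm (𝕍.bracket W Y) U,
      𝕍.bracket_antisymm (𝕍.bracket W (m.mul U Z)) X,
      𝕍.bracket_antisymm (𝕍.bracket W (m.mul U Z)) Y,
      𝕍.bracket_antisymm (𝕍.bracket W (m.mul X Y)) U,
      𝕍.bracket_antisymm (m.mul U (𝕍.bracket W Z)) X,
      𝕍.bracket_antisymm (m.mul U (𝕍.bracket W Z)) Y,
      𝕍.bracket_antisymm (m.mul X Y) U,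
      𝕍.bracket_antisymm (m.mul X Y) (𝕍.bracket U W),
      𝕍.bracket_antisymm (m.mul X Y) (𝕍.bracket W (m.mul U Z)),
      𝕍.bracket_antisymm (m.mul X Y) (m.mul U (𝕍.bracket W Z)),
      𝕍.bracket_antisymm (m.mul Z (𝕍.bracket U W)) X,
      𝕍.bracket_antisymm (m.mul Z (𝕍.bracket U W)) Y,
      𝕍.bracket_antisymm (m.mul Z (𝕍.bracket U W)) (m.mul X Y),
      hF.comm Z U,
      hF.comm (𝕍.bracket U X) Z,
      hF.comm (𝕍.bracket U Y) Z,
      hF.comm (𝕍.bracket U (𝕍.bracket W X)) Z,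
      hF.comm (𝕍.bracket U (𝕍.bracket W Y)) Z,
      hF.comm (𝕍.bracket U (𝕍.bracket W (m.mul X Y))) Z,
      hF.comm (𝕍.bracket U (m.mul X Y)) Z,
      hF.comm (𝕍.bracket W Z) U,
      hF.comm (𝕍.bracket W Z) (𝕍.bracket U X),
      hF.comm (𝕍.bracket W Z) (𝕍.bracket U Y),
      hF.comm (𝕍.bracket W Z) (𝕍.bracket U (m.mul X Y)),
      hF.comm (𝕍.bracket W (m.mul U (𝕍.bracket X Z))) Y,
      hF.comm (𝕍.bracket W (m.mul U (𝕍.bracket Y Z))) X,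
      hF.comm (𝕍.bracket W (m.mul Z (𝕍.bracket U X))) Y,
      hF.comm (𝕍.bracket W (m.mul Z (𝕍.bracket U Y))) X,
      hF.comm (𝕍.bracket X Z) U,
      hF.comm (𝕍.bracket X (𝕍.bracket U W)) Z,
      hF.comm (𝕍.bracket X (𝕍.bracket W (m.mul U Z))) Y,
      hF.comm (𝕍.bracket X (m.mul U Z)) Y,
      hF.comm (𝕍.bracket X (m.mul U Z)) (𝕍.bracket W Y),
      hF.comm (𝕍.bracket X (m.mul U (𝕍.bracket W Z))) Y,
      hF.comm (𝕍.bracket X (m.mul Z (𝕍.bracket U W))) Y,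
      hF.comm (𝕍.bracket Y Z) U,
      hF.comm (𝕍.bracket Y (𝕍.bracket U W)) Z,
      hF.comm (𝕍.bracket Y (𝕍.bracket W (m.mul U Z))) X,
      hF.comm (𝕍.bracket Y (m.mul U Z)) X,
      hF.comm (𝕍.bracket Y (m.mul U Z)) (𝕍.bracket W X),
      hF.comm (𝕍.bracket (𝕍.bracket U W) (m.mul X Y)) Z,
      hF.comm (𝕍.bracket (𝕍.bracket W X) (m.mul U Z)) Y,
      hF.comm (𝕍.bracket (𝕍.bracket W Y) (m.mul U Z)) X,
      hF.comm (m.mul U (𝕍.bracket X Z)) Y,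
      hF.comm (m.mul U (𝕍.bracket X Z)) (𝕍.bracket W Y),
      hF.comm (m.mul U (𝕍.bracket Y Z)) X,
      hF.comm (m.mul U (𝕍.bracket Y Z)) (𝕍.bracket W X),
      hF.comm (m.mul Z (𝕍.bracket U X)) Y,
      hF.comm (m.mul Z (𝕍.bracket U X)) (𝕍.bracket W Y),
      hF.comm (m.mul Z (𝕍.bracket U Y)) X,
      hF.comm (m.mul Z (𝕍.bracket U Y)) (𝕍.bracket W X),
      br_neg_r, br_neg_l, mu_neg_r, mu_neg_l, neg_neg]
    abel
  rw [key, hT X Y Z U, hT (𝕍.bracket W X) Y Z U, hT X (𝕍.bracket W Y) Z U,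
    hT X Y (𝕍.bracket W Z) U, hT X Y Z (𝕍.bracket W U), br_zero_r]
  abel


end LinearFMan
end

section
/- Let (M,∘,e) be an F-manifold. Then for every vector field V on M, the expression (L_V∘)(X,Y)∘Z + (L_V∘)(X∘Y, Z) is totally symmetric in the vector fields X, Y, Z; in particular it is invariant under interchanging X and Z. -/
namespace LinearFMan

lemma mul_sub_left' {C V : Type*} [CommRing C] [AddCommGroup V] [Module C V]
    (m : Multiplication C V) (a b c : V) :
    m.mul (a - b) c = m.mul a c - m.mul b c := by
  have h := m.add_left (a - b) b c
  rw [sub_add_cancel] at h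
  rw [h]; abel

lemma key_expand {C V : Type*} [CommRing C] [AddCommGroup V] [Module C V]
    (𝕍 : VFCalc C V) (m : Multiplication C V) (U X Y Z : V) :
    m.mul (lieDerivMul 𝕍 m U X Y) Z + lieDerivMul 𝕍 m U (m.mul X Y) Z
      = 𝕍.bracket U (m.mul (m.mul X Y) Z)
        - m.mul (m.mul (𝕍.bracket U X) Y) Z
        - m.mul (m.mul X (𝕍.bracket U Y)) Z
        - m.mul (m.mul X Y) (𝕍.bracket U Z) := by
  simp only [lieDerivMul, mul_sub_left']
  abel

/-- On any F-manifold, for every vector field `U` the expression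
`(L_U∘)(X,Y)∘Z + (L_U∘)(X∘Y,Z)` is totally symmetric in `X, Y, Z`; in particular it is
invariant under interchanging `X` and `Z`. -/
theorem statement_8
    {C V : Type*} [CommRing C] [AddCommGroup V] [Module C V]
    (𝕍 : VFCalc C V) (m : Multiplication C V) (e : V)
    (hF : IsFManifold 𝕍 m e)
    (U X Y Z : V) :
    (m.mul (lieDerivMul 𝕍 m U X Y) Z + lieDerivMul 𝕍 m U (m.mul X Y) Z
      = m.mul (lieDerivMul 𝕍 m U Y X) Z + lieDerivMul 𝕍 m U (m.mul Y X) Z) ∧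
    (m.mul (lieDerivMul 𝕍 m U X Y) Z + lieDerivMul 𝕍 m U (m.mul X Y) Z
      = m.mul (lieDerivMul 𝕍 m U Z Y) X + lieDerivMul 𝕍 m U (m.mul Z Y) X) := by
  have habc : ∀ a b c : V, m.mul (m.mul a b) c = m.mul (m.mul c b) a := by
    intro a b c
    rw [hF.assoc, hF.comm a (m.mul b c), hF.comm b c, hF.assoc]
  have hld : lieDerivMul 𝕍 m U X Y = lieDerivMul 𝕍 m U Y X := by
    simp only [lieDerivMul]
    rw [hF.comm X Y, hF.comm (𝕍.bracket U X) Y, hF.comm X (𝕍.bracket U Y)]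
    abel
  constructor
  · rw [hld, hF.comm X Y]
  · rw [key_expand, key_expand, habc X Y Z, habc (𝕍.bracket U X) Y Z,
      habc X (𝕍.bracket U Y) Z, habc X Y (𝕍.bracket U Z)]
    abel
end LinearFMan
end

section
/- Let (M,∘,e,∇) be a flat F-manifold with prolongation components 𝔩, 𝔇 on TM ⊕ T*M. Let Z be a ∇-parallel vector field and let s = (X,ξ), s̃ = (Y,η) be sections of TM ⊕ T*M such that X and Y are ∇-parallel. Then 𝔩_Z [s, s̃] = [s, 𝔩_Z s̃] − 𝔇_{Z,Y} s − α + 2∇_Z β, where [·,·] is the untwisted Dorfman bracket, α is the 1-form W ↦ 2⟨𝔇_{Z,W} s, s̃⟩, β is the 1-form W ↦ 2⟨s, Y∘W⟩, ∇_Z of a 1-form γ is (∇_Z γ)(W) := Z(γ(W)) − γ(∇_Z W), and 1-forms are regarded as sections of TM ⊕ T*M with zero vector-field part. -/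
namespace LinearFMan

variable {C V : Type*} [CommRing C] [AddCommGroup V] [Module C V]

/-- A 1-form, modelled as a `C^∞(M)`-linear map on vector fields. -/
def IsOneForm (η : V → C) : Prop :=
  (∀ x y : V, η (x + y) = η x + η y) ∧ (∀ (f : C) (x : V), η (f • x) = f * η x)

/-- The component `𝔩` of the prolongation on `TM ⊕ T*M`. -/
def prolL (𝕍 : VFCalc C V) (m : Multiplication C V) (X : V)
    (s : V × (V → C)) : V × (V → C) :=
  (m.mul X s.1, fun W => s.2 (m.mul X W))

/-- The component `𝔇` of the prolongation on `TM ⊕ T*M`. -/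
def prolD (𝕍 : VFCalc C V) (m : Multiplication C V) (cn : Connection C V 𝕍)
    (X Y : V) (s : V × (V → C)) : V × (V → C) :=
  (lieDerivMul 𝕍 m s.1 X Y,
   fun W =>
     𝕍.act X (s.2 (m.mul Y W)) + 𝕍.act Y (s.2 (m.mul X W))
       - s.2 (m.mul (symBr cn X Y) W) - 𝕍.act (m.mul X Y) (s.2 W)
       - s.2 (lieDerivMul 𝕍 m W X Y))

/-- The canonical scalar product of `TM ⊕ T*M`. -/
noncomputable def pairTT [Algebra ℝ C] (s t : V × (V → C)) : C :=
  (2⁻¹ : ℝ) • (s.2 t.1 + t.2 s.1)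

/-- The exterior derivative of a 1-form: `dξ(A,B) = A(ξB) − B(ξA) − ξ[A,B]`. -/
def dOne (𝕍 : VFCalc C V) (ξ : V → C) (A B : V) : C :=
  𝕍.act A (ξ B) - 𝕍.act B (ξ A) - ξ (𝕍.bracket A B)

/-- Lie derivative of a 1-form: `(L_X η)(W) = X(ηW) − η[X,W]`. -/
def lieOne (𝕍 : VFCalc C V) (X : V) (η : V → C) : V → C :=
  fun W => 𝕍.act X (η W) - η (𝕍.bracket X W)

/-- The untwisted Dorfman bracket on `TM ⊕ T*M`:
`[(X,ξ),(Y,η)] = ([X,Y], L_X η − i_Y dξ)`. -/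
def dorfman (𝕍 : VFCalc C V) (s t : V × (V → C)) : V × (V → C) :=
  (𝕍.bracket s.1 t.1, fun W => lieOne 𝕍 s.1 t.2 W - dOne 𝕍 s.2 t.1 W)

/-- Covariant derivative of a 1-form: `(∇_Z β)(W) = Z(βW) − β(∇_Z W)`. -/
def nablaOne {𝕍 : VFCalc C V} (cn : Connection C V 𝕍) (Z : V) (β : V → C) : V → C :=
  fun W => 𝕍.act Z (β W) - β (cn.nabla Z W)

/-- Compatibility of the prolongation of a flat F-manifold with the
untwisted Dorfman bracket: for a `∇`-parallel vector field `Z` and sections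
`s = (X,ξ)`, `s̃ = (Y,η)` with `X`, `Y` `∇`-parallel,
`𝔩_Z [s,s̃] = [s, 𝔩_Z s̃] − 𝔇_{Z,Y} s − α + 2 ∇_Z β`, where `α(W) = 2⟨𝔇_{Z,W}s, s̃⟩`,
`β(W) = 2⟨s, Y∘W⟩`, and 1-forms have zero vector-field part. -/
theorem statement_13
    [Algebra ℝ C]
    (𝕍 : VFCalc C V) (m : Multiplication C V) (e : V) (cn : Connection C V 𝕍)
    (hflat : IsFlatFManifold 𝕍 m e cn)
    (Z : V) (hZ : ∀ W, cn.nabla W Z = 0)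
    (X : V) (ξ : V → C) (hξ : IsOneForm ξ) (hX : ∀ W, cn.nabla W X = 0)
    (Y : V) (η : V → C) (hη : IsOneForm η) (hY : ∀ W, cn.nabla W Y = 0) :
    prolL 𝕍 m Z (dorfman 𝕍 (X, ξ) (Y, η))
      = dorfman 𝕍 (X, ξ) (prolL 𝕍 m Z (Y, η))
        - prolD 𝕍 m cn Z Y (X, ξ)
        - ((0 : V), fun W => (2 : C) * pairTT (prolD 𝕍 m cn Z W (X, ξ)) (Y, η))
        + (2 : ℕ) • ((0 : V),
            nablaOne cn Z (fun W => (2 : C) * pairTT (X, ξ) (m.mul Y W, (0 : V → C)))) := by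
  obtain ⟨hF, htf, hfl, hne, hns⟩ := hflat
  have br : ∀ A B : V, 𝕍.bracket A B = cn.nabla A B - cn.nabla B A := by
    intro A B
    have h := htf A B
    rw [torsion, sub_eq_zero] at h
    exact h.symm
  have hXZ : 𝕍.bracket X Z = 0 := by rw [br, hZ, hX, sub_zero]
  have hXY : 𝕍.bracket X Y = 0 := by rw [br, hY, hX, sub_zero]
  have hYZ : 𝕍.bracket Y Z = 0 := by rw [br, hZ, hY, sub_zero]
  have ξzero : ξ 0 = 0 := by simpa using hξ.2 0 0
  have ξneg : ∀ x : V, ξ (-x) = -ξ x := by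
    intro x; have := hξ.2 (-1) x; simpa using this
  have ξsub : ∀ x y : V, ξ (x - y) = ξ x - ξ y := by
    intro x y; rw [sub_eq_add_neg, hξ.1, ξneg, sub_eq_add_neg]
  have ηzero : η 0 = 0 := by simpa using hη.2 0 0
  have ηneg : ∀ x : V, η (-x) = -η x := by
    intro x; have := hη.2 (-1) x; simpa using this
  have ηsub : ∀ x y : V, η (x - y) = η x - η y := by
    intro x y; rw [sub_eq_add_neg, hη.1, ηneg, sub_eq_add_neg]
  have mz : ∀ A : V, m.mul A 0 = 0 := by
    intro A; simpa using m.smul_right (0 : C) A 0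
  have zm : ∀ A : V, m.mul 0 A = 0 := by
    intro A; simpa using m.smul_left (0 : C) 0 A
  have mnegr : ∀ A x : V, m.mul A (-x) = -m.mul A x := by
    intro A x; have := m.smul_right (-1 : C) A x; simpa using this
  have msubr : ∀ A x y : V, m.mul A (x - y) = m.mul A x - m.mul A y := by
    intro A x y; rw [sub_eq_add_neg, m.add_right, mnegr, sub_eq_add_neg]
  have mnegl : ∀ A x : V, m.mul (-x) A = -m.mul x A := by
    intro A x; have := m.smul_left (-1 : C) x A; simpa using this
  have msubl : ∀ A x y : V, m.mul (x - y) A = m.mul x A - m.mul y A := by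
    intro A x y; rw [sub_eq_add_neg, m.add_left, mnegl, sub_eq_add_neg]
  have two_half : ∀ c : C, (2 : C) * ((2⁻¹ : ℝ) • c) = c := by
    intro c
    rw [mul_smul_comm, show (2 : C) * c = (2 : ℝ) • c from by
      rw [Algebra.smul_def, map_ofNat], smul_smul]
    norm_num
  apply Prod.ext
  · simp only [prolL, dorfman, prolD, Prod.fst_sub, Prod.fst_add, Prod.smul_fst,
      smul_zero, sub_zero, add_zero, lieDerivMul, hXY, hXZ, zm, mz]
    rw [sub_self]

  · funext W
    simp only [prolL, dorfman, prolD, Prod.snd_sub, Prod.snd_add, Prod.smul_snd,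
      Pi.sub_apply, Pi.add_apply, Pi.smul_apply, lieOne, dOne, lieDerivMul, symBr,
      nablaOne, pairTT, Pi.zero_apply, add_zero, smul_eq_mul, two_half,
      hX, hY, hZ, hXY, hXZ, hYZ, zm, mz, ξzero, ηzero, sub_zero, zero_sub, add_zero, zero_add]
    simp only [br, hX, hY, hZ, sub_zero, zero_sub, mnegr, mnegl, msubr, msubl,
      ξsub, ηsub, ξneg, ηneg, hF.comm W Y, hF.comm (cn.nabla Z W) Y, nsmul_eq_mul,
      Nat.cast_ofNat]
    ring



end LinearFMan
end

section
/- On the F-manifold (ℝ², ∘, e) with coordinates (x,ξ), multiplication (a,b)∘(a′,b′) = (a a′, a b′ + a′ b) and unit e = (1,0): a smooth vector field ℰ = a ∂x + b ∂ξ (i.e. ℰ(x,ξ) = (a(x,ξ), b(x,ξ))) is an Euler field if and only if there exist a constant c and a smooth function g : ℝ → ℝ such that a(x,ξ) = x + c and b(x,ξ) = g(ξ) for all (x,ξ). -/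
/-!
**Statement 17.** Classification of Euler fields on the F-manifold
`(ℝ², ∘, e)` with `(a,b)∘(a',b') = (a a', a b' + a' b)` and `e = (1,0)`:
a smooth vector field `ℰ = a ∂x + b ∂ξ` is an Euler field iff `a(x,ξ) = x + c`
and `b(x,ξ) = g(ξ)` for a constant `c` and a smooth function `g`.
-/

namespace Stmt17

def mul2 (X Y : ℝ × ℝ → ℝ × ℝ) : ℝ × ℝ → ℝ × ℝ :=
  fun p => ((X p).1 * (Y p).1, (X p).1 * (Y p).2 + (Y p).1 * (X p).2)

noncomputable def bracket2 (X Y : ℝ × ℝ → ℝ × ℝ) : ℝ × ℝ → ℝ × ℝ :=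
  fun p => fderiv ℝ Y p (X p) - fderiv ℝ X p (Y p)

noncomputable def lieDeriv2 (X Y Z : ℝ × ℝ → ℝ × ℝ) : ℝ × ℝ → ℝ × ℝ :=
  fun p => bracket2 X (mul2 Y Z) p - mul2 (bracket2 X Y) Z p - mul2 Y (bracket2 X Z) p

theorem statement_17 (ℰ : ℝ × ℝ → ℝ × ℝ) (hℰ : ContDiff ℝ (⊤ : ℕ∞) ℰ) :
    (∀ X Y : ℝ × ℝ → ℝ × ℝ, ContDiff ℝ (⊤ : ℕ∞) X → ContDiff ℝ (⊤ : ℕ∞) Y →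
        lieDeriv2 ℰ X Y = mul2 X Y)
    ↔ ∃ (c : ℝ) (g : ℝ → ℝ), ContDiff ℝ (⊤ : ℕ∞) g ∧
        ∀ p : ℝ × ℝ, ℰ p = (p.1 + c, g p.2) := by
  constructor
  · intro H
    have hd : Differentiable ℝ ℰ := hℰ.differentiable (by norm_num)
    have key1 : ∀ p : ℝ × ℝ, fderiv ℝ ℰ p ((1:ℝ), (0:ℝ)) = (1, 0) := by
      intro p
      have h := congrFun (H (fun _ => ((1:ℝ),(0:ℝ))) (fun _ => ((1:ℝ),(0:ℝ)))
        contDiff_const contDiff_const) p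
      have hmm : mul2 (fun _ => ((1:ℝ),(0:ℝ))) (fun _ => ((1:ℝ),(0:ℝ)))
          = fun _ => ((1:ℝ),(0:ℝ)) := by funext q; simp [mul2]
      simp only [lieDeriv2, bracket2, hmm, mul2, fderiv_const, Prod.ext_iff,
        ContinuousLinearMap.zero_apply] at h
      simp at h
      exact Prod.ext h.1 h.2
    have key2 : ∀ p : ℝ × ℝ, (fderiv ℝ ℰ p ((0:ℝ), (1:ℝ))).1 = 0 := by
      intro p
      have h := congrFun (H (fun _ => ((0:ℝ),(1:ℝ))) (fun _ => ((0:ℝ),(1:ℝ)))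
        contDiff_const contDiff_const) p
      have hmm : mul2 (fun _ => ((0:ℝ),(1:ℝ))) (fun _ => ((0:ℝ),(1:ℝ)))
          = fun _ => ((0:ℝ),(0:ℝ)) := by funext q; simp [mul2]
      simp only [lieDeriv2, bracket2, hmm, mul2, fderiv_fun_const, Prod.ext_iff,
        ContinuousLinearMap.zero_apply] at h
      simp at h
      have h0 : ((0:ℝ),(0:ℝ)) = (0 : ℝ × ℝ) := rfl
      rw [h0, map_zero] at h
      obtain ⟨-, h⟩ := h
      simp only [Prod.snd_zero, neg_zero, zero_add] at h
      linarith
    have keyv : ∀ (p v : ℝ × ℝ), (fderiv ℝ ℰ p v).1 = v.1 := by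
      intro p v
      have hv : v = v.1 • ((1:ℝ),(0:ℝ)) + v.2 • ((0:ℝ),(1:ℝ)) := by
        ext <;> simp
      set f := fderiv ℝ ℰ p with hf
      rw [hv, f.map_add, f.map_smul, f.map_smul, key1 p]
      have h2 := key2 p
      rw [← hf] at h2
      simp [h2]
    -- first component is p.1 + c
    have hF : ∀ p : ℝ × ℝ, (ℰ p).1 - p.1 = (ℰ ((0:ℝ),(0:ℝ))).1 - 0 := by
      intro p
      apply is_const_of_fderiv_eq_zero (𝕜 := ℝ) (f := fun q : ℝ × ℝ => (ℰ q).1 - q.1)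
      · exact (differentiable_fst.comp hd).sub differentiable_fst
      · intro q
        have h1 : HasFDerivAt (fun q : ℝ × ℝ => (ℰ q).1 - q.1)
            (((ContinuousLinearMap.fst ℝ ℝ ℝ).comp (fderiv ℝ ℰ q))
              - ContinuousLinearMap.fst ℝ ℝ ℝ) q :=
          ((hd q).hasFDerivAt.fst).sub hasFDerivAt_fst
        rw [h1.fderiv]
        refine ContinuousLinearMap.ext fun v => ?_
        simp [keyv q]
    -- second component depends only on ξ
    have hb : ∀ x ξ : ℝ, (ℰ (x, ξ)).2 = (ℰ ((0:ℝ), ξ)).2 := by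
      intro x ξ
      have hder : ∀ t : ℝ, HasDerivAt (fun t : ℝ => (ℰ (t, ξ)).2) 0 t := by
        intro t
        have hc : HasDerivAt (fun t : ℝ => ((t, ξ) : ℝ × ℝ)) ((1:ℝ),(0:ℝ)) t :=
          (hasDerivAt_id t).prodMk (hasDerivAt_const t ξ)
        have h2 := hasFDerivAt_snd.comp_hasDerivAt t ((hd (t, ξ)).hasFDerivAt.comp_hasDerivAt t hc)
        rw [key1 (t, ξ)] at h2
        exact h2
      have hdiff : Differentiable ℝ (fun t : ℝ => (ℰ (t, ξ)).2) :=
        fun t => (hder t).differentiableAt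
      have hz : ∀ t : ℝ, deriv (fun t : ℝ => (ℰ (t, ξ)).2) t = 0 :=
        fun t => (hder t).deriv
      exact is_const_of_deriv_eq_zero hdiff hz x 0
    refine ⟨(ℰ ((0:ℝ),(0:ℝ))).1, fun ξ => (ℰ ((0:ℝ), ξ)).2,
      contDiff_snd.comp (hℰ.comp (contDiff_const.prodMk contDiff_id)), ?_⟩
    intro p
    have h1 := hF p
    have h2 := hb p.1 p.2
    refine Prod.ext ?_ ?_
    · show (ℰ p).1 = p.1 + (ℰ ((0:ℝ),(0:ℝ))).1
      linarith
    · show (ℰ p).2 = (ℰ ((0:ℝ), p.2)).2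
      exact h2
  · rintro ⟨c, g, hg, hE⟩ X Y hX hY
    have hgd : Differentiable ℝ g := hg.differentiable (by norm_num)
    have hEfun : ℰ = fun q : ℝ × ℝ => (q.1 + c, g q.2) := funext hE
    funext p
    have hXp : HasFDerivAt X (fderiv ℝ X p) p :=
      (hX.differentiable (by norm_num) p).hasFDerivAt
    have hYp : HasFDerivAt Y (fderiv ℝ Y p) p :=
      (hY.differentiable (by norm_num) p).hasFDerivAt
    have hE' : HasFDerivAt ℰ
        ((ContinuousLinearMap.fst ℝ ℝ ℝ).prod
          (deriv g p.2 • ContinuousLinearMap.snd ℝ ℝ ℝ)) p := by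
      rw [hEfun]
      exact (hasFDerivAt_fst.add_const c).prodMk
        (((hgd p.2).hasDerivAt).comp_hasFDerivAt p hasFDerivAt_snd)
    have hM := ((hXp.fst.mul hYp.fst)).prodMk
      ((hXp.fst.mul hYp.snd).add (hYp.fst.mul hXp.snd))
    have hMf : fderiv ℝ (mul2 X Y) p = _ := HasFDerivAt.fderiv (f := mul2 X Y) hM
    simp only [lieDeriv2, bracket2, hMf, hE'.fderiv, mul2]
    simp only [ContinuousLinearMap.prod_apply, ContinuousLinearMap.add_apply,
      ContinuousLinearMap.smul_apply, ContinuousLinearMap.comp_apply,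
      ContinuousLinearMap.coe_fst', ContinuousLinearMap.coe_snd',
      smul_eq_mul, Prod.ext_iff, Prod.fst_sub, Prod.snd_sub, Prod.fst_add, Prod.snd_add,
      Prod.smul_fst, Prod.smul_snd]
    constructor <;> ring

end Stmt17
end

section
/- On M = ℝ³ with coordinates (x₁, x₂, ξ), fix a smooth function h : ℝ → ℝ and identify vector fields with smooth maps ℝ³ → ℝ³. Define the multiplication pointwise at p = (x₁,x₂,ξ) by (a₁,a₂,a₃)∘(b₁,b₂,b₃) := (a₁b₁, a₁b₂ + a₂b₁, a₁b₃ + a₃b₁ + ξ h(x₂) a₂b₂). Then ∘ is C^∞(M)-bilinear, commutative and associative, the constant vector field e = (1,0,0) is a unit, and the Hertling–Manin condition (L_{X∘Y}∘)(Z,V) = X∘(L_Y∘)(Z,V) + Y∘(L_X∘)(Z,V) holds for all vector fields X,Y,Z,V; hence (ℝ³, ∘, e) is an F-manifold. -/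
/-!
**Statement 18.** The F-manifold structure on `ℝ³` (coordinates `(x₁, x₂, ξ)`) with
pointwise multiplication
`(a₁,a₂,a₃)∘(b₁,b₂,b₃) = (a₁b₁, a₁b₂ + a₂b₁, a₁b₃ + a₃b₁ + ξ h(x₂) a₂b₂)`
(`h : ℝ → ℝ` smooth) and unit `e = (1,0,0)`.
-/

namespace Stmt18

/-- `ℝ³` as `ℝ × ℝ × ℝ`, with `p.1 = x₁`, `p.2.1 = x₂`, `p.2.2 = ξ`. -/
abbrev Space := ℝ × ℝ × ℝ

/-- The pointwise multiplication of vector fields, depending on `h`. -/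
def mul3 (h : ℝ → ℝ) (X Y : Space → Space) : Space → Space :=
  fun p =>
    ((X p).1 * (Y p).1,
     (X p).1 * (Y p).2.1 + (Y p).1 * (X p).2.1,
     (X p).1 * (Y p).2.2 + (Y p).1 * (X p).2.2 + p.2.2 * h p.2.1 * ((X p).2.1 * (Y p).2.1))

noncomputable def bracket3 (X Y : Space → Space) : Space → Space :=
  fun p => fderiv ℝ Y p (X p) - fderiv ℝ X p (Y p)

noncomputable def lieDeriv3 (h : ℝ → ℝ) (X Y Z : Space → Space) : Space → Space :=
  fun p => bracket3 X (mul3 h Y Z) p - mul3 h (bracket3 X Y) Z p - mul3 h Y (bracket3 X Z) p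

/-- The constant vector field `e = (1,0,0)`. -/
def e3 : Space → Space := fun _ => (1, 0, 0)

/-- frozen application of a CLM -/
def app (A : Space →L[ℝ] Space) (v : Space) : Space := A v

def E1 : Space := (1,0,0)
def E2 : Space := (0,1,0)
def E3 : Space := (0,0,1)

lemma apply3 (A : Space →L[ℝ] Space) (v : Space) :
    A v = v.1 • app A E1 + v.2.1 • app A E2 + v.2.2 • app A E3 := by
  have hv : v = v.1 • E1 + v.2.1 • E2 + v.2.2 • E3 := by
    simp [E1, E2, E3, Prod.ext_iff]
  conv_lhs => rw [hv]
  simp [app]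

lemma fderiv_mul3_apply (h : ℝ → ℝ) (hh : ContDiff ℝ (⊤ : ℕ∞) h)
    {X Y : Space → Space} (hX : Differentiable ℝ X) (hY : Differentiable ℝ Y)
    (p v : Space) :
    fderiv ℝ (mul3 h X Y) p v =
      ((fderiv ℝ X p v).1 * (Y p).1 + (X p).1 * (fderiv ℝ Y p v).1,
       (fderiv ℝ X p v).1 * (Y p).2.1 + (X p).1 * (fderiv ℝ Y p v).2.1
         + (fderiv ℝ Y p v).1 * (X p).2.1 + (Y p).1 * (fderiv ℝ X p v).2.1,
       (fderiv ℝ X p v).1 * (Y p).2.2 + (X p).1 * (fderiv ℝ Y p v).2.2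
         + (fderiv ℝ Y p v).1 * (X p).2.2 + (Y p).1 * (fderiv ℝ X p v).2.2
         + (v.2.2 * h p.2.1 + p.2.2 * deriv h p.2.1 * v.2.1) * ((X p).2.1 * (Y p).2.1)
         + p.2.2 * h p.2.1 * ((fderiv ℝ X p v).2.1 * (Y p).2.1 + (X p).2.1 * (fderiv ℝ Y p v).2.1)) := by
  have hX' : HasFDerivAt X (fderiv ℝ X p) p := (hX p).hasFDerivAt
  have hY' : HasFDerivAt Y (fderiv ℝ Y p) p := (hY p).hasFDerivAt
  have hX1 := hX'.fst
  have hX2 := hX'.snd.fst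
  have hX3 := hX'.snd.snd
  have hY1 := hY'.fst
  have hY2 := hY'.snd.fst
  have hY3 := hY'.snd.snd
  have hq3 : HasFDerivAt (fun q : Space => q.2.2)
      ((ContinuousLinearMap.snd ℝ ℝ ℝ).comp (ContinuousLinearMap.snd ℝ ℝ (ℝ × ℝ))) p :=
    (hasFDerivAt_snd (p := p)).snd
  have hq2 : HasFDerivAt (fun q : Space => q.2.1)
      ((ContinuousLinearMap.fst ℝ ℝ ℝ).comp (ContinuousLinearMap.snd ℝ ℝ (ℝ × ℝ))) p :=
    (hasFDerivAt_snd (p := p)).fst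
  have hhd : HasDerivAt h (deriv h p.2.1) p.2.1 :=
    ((hh.differentiable (by simp)) p.2.1).hasDerivAt
  have hhc : HasFDerivAt (fun q : Space => h q.2.1)
      ((deriv h p.2.1) • ((ContinuousLinearMap.fst ℝ ℝ ℝ).comp (ContinuousLinearMap.snd ℝ ℝ (ℝ × ℝ)))) p :=
    hhd.comp_hasFDerivAt p hq2
  have hg := hq3.mul hhc
  have H := HasFDerivAt.prodMk (hX1.mul hY1) (HasFDerivAt.prodMk (HasFDerivAt.add (hX1.mul hY2) (hY1.mul hX2))
    (HasFDerivAt.add (HasFDerivAt.add (hX1.mul hY3) (hY1.mul hX3)) (hg.mul (hX2.mul hY2))))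
  have H' : HasFDerivAt (mul3 h X Y) _ p := H
  rw [H'.fderiv]
  simp [ContinuousLinearMap.add_apply, ContinuousLinearMap.smul_apply,
    ContinuousLinearMap.comp_apply, ContinuousLinearMap.prod_apply, Prod.ext_iff]
  ring_nf
  tauto

theorem statement_18 (h : ℝ → ℝ) (hh : ContDiff ℝ (⊤ : ℕ∞) h) :
    -- C^∞(M)-bilinearity of ∘
    (∀ (f : Space → ℝ) (X Y : Space → Space),
        mul3 h (fun p => f p • X p) Y = fun p => f p • mul3 h X Y p) ∧
    (∀ (f : Space → ℝ) (X Y : Space → Space),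
        mul3 h X (fun p => f p • Y p) = fun p => f p • mul3 h X Y p) ∧
    (∀ X Y Z : Space → Space,
        mul3 h (fun p => X p + Y p) Z = fun p => mul3 h X Z p + mul3 h Y Z p) ∧
    (∀ X Y Z : Space → Space,
        mul3 h X (fun p => Y p + Z p) = fun p => mul3 h X Y p + mul3 h X Z p) ∧
    -- commutativity, associativity, unit
    (∀ X Y, mul3 h X Y = mul3 h Y X) ∧
    (∀ X Y Z, mul3 h (mul3 h X Y) Z = mul3 h X (mul3 h Y Z)) ∧
    (∀ X, mul3 h e3 X = X) ∧
    -- the Hertling–Manin condition for (smooth) vector fields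
    (∀ X Y Z W : Space → Space,
        ContDiff ℝ (⊤ : ℕ∞) X → ContDiff ℝ (⊤ : ℕ∞) Y →
        ContDiff ℝ (⊤ : ℕ∞) Z → ContDiff ℝ (⊤ : ℕ∞) W →
        lieDeriv3 h (mul3 h X Y) Z W
          = fun p => mul3 h X (lieDeriv3 h Y Z W) p + mul3 h Y (lieDeriv3 h X Z W) p) := by
  refine ⟨?_, ?_, ?_, ?_, ?_, ?_, ?_, ?_⟩
  · intro f X Y; funext p; simp [mul3, Prod.ext_iff]; constructor <;> [skip; constructor] <;> ring
  · intro f X Y; funext p; simp [mul3, Prod.ext_iff]; constructor <;> [skip; constructor] <;> ring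
  · intro X Y Z; funext p; simp [mul3, Prod.ext_iff]; constructor <;> [skip; constructor] <;> ring
  · intro X Y Z; funext p; simp [mul3, Prod.ext_iff]; constructor <;> [skip; constructor] <;> ring
  · intro X Y; funext p; simp [mul3, Prod.ext_iff]; constructor <;> [skip; constructor] <;> ring
  · intro X Y Z; funext p; simp [mul3, Prod.ext_iff]; constructor <;> [skip; constructor] <;> ring
  · intro X; funext p; simp [mul3, e3]
  · intro X Y Z W hX hY hZ hW
    have dX : Differentiable ℝ X := hX.differentiable (by simp)
    have dY : Differentiable ℝ Y := hY.differentiable (by simp)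
    have dZ : Differentiable ℝ Z := hZ.differentiable (by simp)
    have dW : Differentiable ℝ W := hW.differentiable (by simp)
    have dXY : Differentiable ℝ (mul3 h X Y) := by
      have : ContDiff ℝ (⊤ : ℕ∞) (mul3 h X Y) := by
        unfold mul3
        fun_prop
      exact this.differentiable (by simp)
    funext p
    simp only [lieDeriv3, bracket3, mul3, fderiv_mul3_apply h hh dX dY,
      fderiv_mul3_apply h hh dZ dW]
    simp only [apply3]
    simp only [Prod.fst_add, Prod.snd_add, Prod.fst_sub, Prod.snd_sub, Prod.smul_fst,
      Prod.smul_snd, smul_eq_mul, Prod.mk.injEq, Prod.mk_sub_mk, Prod.mk_add_mk]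
    refine ⟨by ring, by ring, by ring⟩

end Stmt18
end

section
/- On the F-manifold (ℝ³, ∘, e) with coordinates (x₁,x₂,ξ), pointwise multiplication (a₁,a₂,a₃)∘(b₁,b₂,b₃) = (a₁b₁, a₁b₂ + a₂b₁, a₁b₃ + a₃b₁ + ξ h(x₂) a₂b₂) (h : ℝ → ℝ smooth) and unit e = (1,0,0): for every constant c and all smooth functions ε, η : ℝ → ℝ such that ε(x₂) h′(x₂) + 2 ε′(x₂) h(x₂) = h(x₂) for all x₂, the vector field ℰ(x₁,x₂,ξ) := (x₁ + c, ε(x₂), ξ η(x₂)) is an Euler field, i.e. (L_ℰ∘)(X,Y) = X∘Y for all vector fields X,Y. -/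
/-!
**Statement 19.** Euler fields on the F-manifold `(ℝ³, ∘, e)` with
`(a₁,a₂,a₃)∘(b₁,b₂,b₃) = (a₁b₁, a₁b₂ + a₂b₁, a₁b₃ + a₃b₁ + ξ h(x₂) a₂b₂)`:
for any constant `c` and smooth `ε, η : ℝ → ℝ` with
`ε h' + 2 ε' h = h`, the vector field `ℰ = (x₁ + c, ε(x₂), ξ η(x₂))` is an Euler field.
-/

namespace Stmt19

abbrev Space := ℝ × ℝ × ℝ

def mul3 (h : ℝ → ℝ) (X Y : Space → Space) : Space → Space :=
  fun p =>
    ((X p).1 * (Y p).1,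
     (X p).1 * (Y p).2.1 + (Y p).1 * (X p).2.1,
     (X p).1 * (Y p).2.2 + (Y p).1 * (X p).2.2 + p.2.2 * h p.2.1 * ((X p).2.1 * (Y p).2.1))

noncomputable def bracket3 (X Y : Space → Space) : Space → Space :=
  fun p => fderiv ℝ Y p (X p) - fderiv ℝ X p (Y p)

noncomputable def lieDeriv3 (h : ℝ → ℝ) (X Y Z : Space → Space) : Space → Space :=
  fun p => bracket3 X (mul3 h Y Z) p - mul3 h (bracket3 X Y) Z p - mul3 h Y (bracket3 X Z) p

theorem proj21 (p : Space) : HasFDerivAt (fun q : Space => q.2.1)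
    ((ContinuousLinearMap.fst ℝ ℝ ℝ).comp (ContinuousLinearMap.snd ℝ ℝ (ℝ × ℝ))) p :=
  (hasFDerivAt_snd).fst

theorem fderivE {ε η : ℝ → ℝ} (hε : ContDiff ℝ (⊤ : ℕ∞) ε) (hη : ContDiff ℝ (⊤ : ℕ∞) η)
    (c : ℝ) (p v : Space) :
    fderiv ℝ (fun q : Space => (q.1 + c, ε q.2.1, q.2.2 * η q.2.1)) p v
      = (v.1, deriv ε p.2.1 * v.2.1, v.2.2 * η p.2.1 + p.2.2 * (deriv η p.2.1 * v.2.1)) := by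
  have hε1 : HasDerivAt ε (deriv ε p.2.1) p.2.1 :=
    ((hε.differentiable (by simp)) p.2.1).hasDerivAt
  have hη1 : HasDerivAt η (deriv η p.2.1) p.2.1 :=
    ((hη.differentiable (by simp)) p.2.1).hasDerivAt
  have c1 : HasFDerivAt (fun q : Space => q.1 + c) (ContinuousLinearMap.fst ℝ ℝ (ℝ × ℝ)) p :=
    (hasFDerivAt_fst).add_const c
  have c2 := hε1.comp_hasFDerivAt p (proj21 p)
  have c3 := ((hasFDerivAt_snd (p := p)).snd).mul (hη1.comp_hasFDerivAt p (proj21 p))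
  have hE : HasFDerivAt (fun q : Space => (q.1 + c, ε q.2.1, q.2.2 * η q.2.1)) _ p :=
    c1.prodMk (c2.prodMk c3)
  rw [hE.fderiv]
  simp [ContinuousLinearMap.smul_apply]
  ring

theorem fderivMul3 {h : ℝ → ℝ} (hh : ContDiff ℝ (⊤ : ℕ∞) h) {X Y : Space → Space}
    (hX : ContDiff ℝ (⊤ : ℕ∞) X) (hY : ContDiff ℝ (⊤ : ℕ∞) Y) (p v : Space) :
    fderiv ℝ (mul3 h X Y) p v
      = ((fderiv ℝ X p v).1 * (Y p).1 + (X p).1 * (fderiv ℝ Y p v).1,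
         (fderiv ℝ X p v).1 * (Y p).2.1 + (X p).1 * (fderiv ℝ Y p v).2.1
           + (fderiv ℝ Y p v).1 * (X p).2.1 + (Y p).1 * (fderiv ℝ X p v).2.1,
         (fderiv ℝ X p v).1 * (Y p).2.2 + (X p).1 * (fderiv ℝ Y p v).2.2
           + (fderiv ℝ Y p v).1 * (X p).2.2 + (Y p).1 * (fderiv ℝ X p v).2.2
           + (v.2.2 * h p.2.1 + p.2.2 * (deriv h p.2.1 * v.2.1)) * ((X p).2.1 * (Y p).2.1)
           + p.2.2 * h p.2.1 * ((fderiv ℝ X p v).2.1 * (Y p).2.1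
               + (X p).2.1 * (fderiv ℝ Y p v).2.1)) := by
  have hh1 : HasDerivAt h (deriv h p.2.1) p.2.1 :=
    ((hh.differentiable (by simp)) p.2.1).hasDerivAt
  have hXf : HasFDerivAt X (fderiv ℝ X p) p :=
    ((hX.differentiable (by simp)) p).hasFDerivAt
  have hYf : HasFDerivAt Y (fderiv ℝ Y p) p :=
    ((hY.differentiable (by simp)) p).hasFDerivAt
  have X1 := hXf.fst
  have X2 := hXf.snd.fst
  have X3 := hXf.snd.snd
  have Y1 := hYf.fst
  have Y2 := hYf.snd.fst
  have Y3 := hYf.snd.snd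
  have hcoef := ((hasFDerivAt_snd (p := p)).snd).mul (hh1.comp_hasFDerivAt p (proj21 p))
  have P1 := X1.mul Y1
  have P2 := (X1.mul Y2).add (Y1.mul X2)
  have P3 := ((X1.mul Y3).add (Y1.mul X3)).add (hcoef.mul (X2.mul Y2))
  have hM : HasFDerivAt (mul3 h X Y) _ p := P1.prodMk (P2.prodMk P3)
  rw [hM.fderiv]
  simp [ContinuousLinearMap.smul_apply, Prod.ext_iff]
  refine ⟨by ring, by ring, by ring⟩

theorem statement_19 (h : ℝ → ℝ) (hh : ContDiff ℝ (⊤ : ℕ∞) h)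
    (c : ℝ) (ε η : ℝ → ℝ)
    (hε : ContDiff ℝ (⊤ : ℕ∞) ε) (hη : ContDiff ℝ (⊤ : ℕ∞) η)
    (heq : ∀ t : ℝ, ε t * deriv h t + 2 * deriv ε t * h t = h t) :
    ∀ X Y : Space → Space, ContDiff ℝ (⊤ : ℕ∞) X → ContDiff ℝ (⊤ : ℕ∞) Y →
      lieDeriv3 h (fun p => (p.1 + c, ε p.2.1, p.2.2 * η p.2.1)) X Y = mul3 h X Y := by
  intro X Y hX hY
  funext p
  simp only [lieDeriv3, bracket3]
  rw [fderivMul3 hh hX hY]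
  simp only [mul3]
  simp only [bracket3, Prod.fst_sub, Prod.snd_sub]
  simp only [fderivE hε hη]
  simp only [Prod.mk_sub_mk, Prod.mk.injEq]
  refine ⟨by ring, by ring, ?_⟩
  linear_combination p.2.2 * (X p).2.1 * (Y p).2.1 * heq p.2.1


end Stmt19
end
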